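/- arXiv:1711.10030 — 7 statements merged into one kernel-verified Lean document; each statement's English description precedes it below -/
import Mathlib

section
/- Let X be a real Banach space and H a real Hilbert space. If F : X → H is a C¹ mapping such that (d1) for every y ∈ H the functional φ : X → ℝ given by φ(x) := (1/2)‖F(x) − y‖_H² satisfies the Palais–Smale condition, and (d2) for every x ∈ X the derivative F′(x) is injective and surjective onto H (F′(x)[X] = H), then F is a diffeomorphism. -/
/-!
Surjectivity: for fixed `y`, Ekeland's principle produces almost-minimizers of
`φ = ½‖F · - y‖²` with small derivative; by Palais–Smale they accumulate at a critical point `z`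
of `φ`, and `φ'(z) = ⟪F z - y, F'(z) ·⟫` vanishes only if `F z = y` because `F'(z)` is onto.

Injectivity: if `F a = F b` with `a ≠ b`, then `φ = ½‖F · - F a‖²` vanishes at `a` and `b`, while
`F'(a)` being an isomorphism makes `φ` bounded below by a positive constant on a small sphere
around `a`. The mountain pass theorem (Ekeland's principle on the space of paths from `a` to `b`,
combined with a deformation along a pseudo-gradient field) then gives a critical point of `φ` at a
positive level; but, as above, a critical point of `φ` is a zero of `φ`.

The inverse is `C¹` by the inverse function theorem, `F` being an open continuous bijection.
-/

open Filter Topology Set Function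

lemma BddBelow.exists_mem_forall_le_add {α : Type*} {f : α → ℝ} {s : Set α}
    (hbdd : BddBelow (f '' s)) (hs : s.Nonempty) {η : ℝ} (hη : 0 < η) :
    ∃ z ∈ s, ∀ w ∈ s, f z ≤ f w + η := by
  obtain ⟨_, ⟨z, hz, rfl⟩, hzlt⟩ :=
    exists_lt_of_csInf_lt (hs.image f) (lt_add_of_pos_right (sInf (f '' s)) hη)
  exact ⟨z, hz, fun w hw => by linarith [csInf_le hbdd (mem_image_of_mem f hw)]⟩

section Ekeland

variable {M : Type*} [PseudoMetricSpace M] {f : M → ℝ} {ε : ℝ}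

def ekelandSet (f : M → ℝ) (ε : ℝ) (x : M) : Set M := {z | f z + ε * dist z x ≤ f x}

lemma mem_ekelandSet_self (x : M) : x ∈ ekelandSet f ε x := by
  simp [ekelandSet]

lemma le_of_mem_ekelandSet (hε : 0 ≤ ε) {x z : M} (hz : z ∈ ekelandSet f ε x) : f z ≤ f x := by
  have := mul_nonneg hε (dist_nonneg (x := z) (y := x))
  simp only [ekelandSet, mem_ofPred_eq] at hz
  linarith

lemma ekelandSet_subset (hε : 0 ≤ ε) {x z : M} (hz : z ∈ ekelandSet f ε x) :
    ekelandSet f ε z ⊆ ekelandSet f ε x := by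
  intro w hw
  simp only [ekelandSet, mem_ofPred_eq] at *
  nlinarith [dist_triangle w z x]

lemma isClosed_ekelandSet (hf : Continuous f) (x : M) : IsClosed (ekelandSet f ε x) :=
  isClosed_le (hf.add (continuous_const.mul (continuous_id.dist continuous_const)))
    continuous_const

theorem ekeland_variational_principle [CompleteSpace M] (hf : Continuous f)
    (hbdd : BddBelow (range f)) (hε : 0 < ε) (x₀ : M) :
    ∃ x, f x ≤ f x₀ ∧ ∀ z, f x - ε * dist z x ≤ f z := by
  set S := ekelandSet f ε
  have hstep : ∀ (x : M) (n : ℕ), ∃ z ∈ S x, ∀ w ∈ S x, f z ≤ f w + 1 / (n + 1) :=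
    fun x n => (hbdd.mono (image_subset_range f _)).exists_mem_forall_le_add
      ⟨x, mem_ekelandSet_self x⟩ Nat.one_div_pos_of_nat
  choose next hnext_mem hnext_le using hstep
  let x : ℕ → M := fun n => Nat.rec x₀ (fun n xn => next xn n) n
  have hanti : Antitone fun n => S (x n) :=
    antitone_nat_of_succ_le fun n => ekelandSet_subset hε.le (hnext_mem (x n) n)
  have hsmall : ∀ n, ∀ w ∈ S (x (n + 1)), ε * dist w (x (n + 1)) ≤ 1 / (n + 1) := by
    intro n w hw
    have h1 := hnext_le (x n) n w (hanti n.le_succ hw)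
    simp only [S, ekelandSet, mem_ofPred_eq] at hw
    change f w + ε * dist w (x (n + 1)) ≤ f (next (x n) n) at hw
    linarith
  have hcauchy : CauchySeq x := by
    refine Metric.cauchySeq_iff'.mpr fun r hr => ?_
    obtain ⟨N, hN⟩ := exists_nat_one_div_lt (mul_pos hε hr)
    refine ⟨N + 1, fun n hn => ?_⟩
    have h := hsmall N (x n) (hanti hn (mem_ekelandSet_self (x n)))
    exact lt_of_mul_lt_mul_left (h.trans_lt hN) hε.le
  obtain ⟨xl, hxl⟩ := cauchySeq_tendsto_of_complete hcauchy
  have hxl_mem : ∀ n, xl ∈ S (x n) := fun n =>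
    (isClosed_ekelandSet hf _).mem_of_tendsto hxl
      (eventually_atTop.mpr ⟨n, fun m hm => hanti hm (mem_ekelandSet_self _)⟩)
  refine ⟨xl, le_of_mem_ekelandSet hε.le (hxl_mem 0), fun z => ?_⟩
  by_contra! hz
  have hzS : z ∈ S xl := by
    simp only [S, ekelandSet, mem_ofPred_eq]
    linarith
  have hle : ∀ n : ℕ, f xl ≤ f z + 1 / (n + 1) := fun n =>
    (le_of_mem_ekelandSet hε.le (hxl_mem (n + 1))).trans
      (hnext_le (x n) n z (ekelandSet_subset hε.le (hxl_mem n) hzS))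
  have : f xl ≤ f z := le_of_forall_pos_lt_add fun η hη => by
    obtain ⟨n, hn⟩ := exists_nat_one_div_lt hη
    linarith [hle n]
  nlinarith [dist_nonneg (x := z) (y := xl)]

end Ekeland

lemma IsCompact.exists_pos_forall_dist_lt {α β : Type*} [PseudoMetricSpace α]
    [PseudoMetricSpace β] {K : Set α} (hK : IsCompact K) {f : α → β} (hf : Continuous f)
    {ε : ℝ} (hε : 0 < ε) : ∃ r > 0, ∀ x ∈ K, ∀ y, dist y x < r → dist (f y) (f x) < ε := by
  obtain ⟨r, hr, h⟩ := Metric.mem_uniformity_dist.mp <|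
    hK.uniformContinuousAt_of_continuousAt f (fun x _ => hf.continuousAt)
      (Metric.dist_mem_uniformity hε)
  exact ⟨r, hr, fun x hx y hxy => by rw [dist_comm]; exact h (by rwa [dist_comm]) hx⟩

lemma ContinuousMap.lipschitzWith_iSup {α : Type*} [TopologicalSpace α] [CompactSpace α]
    [Nonempty α] : LipschitzWith 1 fun f : C(α, ℝ) => ⨆ t, f t := by
  refine LipschitzWith.of_le_add fun f g => ciSup_le fun t => ?_
  have hg : g t ≤ ⨆ t, g t := le_ciSup (isCompact_range g.continuous).bddAbove t
  have hfg : f t - g t ≤ dist f g := (le_abs_self _).trans (f.dist_apply_le_dist (g := g) t)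
  linarith

theorem ContDiff.exists_contDiff_inverse {𝕜 E F : Type*} [RCLike 𝕜] [NormedAddCommGroup E]
    [NormedSpace 𝕜 E] [CompleteSpace E] [NormedAddCommGroup F] [NormedSpace 𝕜 F] [CompleteSpace F]
    {n : WithTop ℕ∞} {f : E → F} (hf : ContDiff 𝕜 n f) (hn : n ≠ 0) (hbij : Bijective f)
    (hf' : ∀ x, Bijective (fderiv 𝕜 f x)) :
    ∃ g : F → E, LeftInverse g f ∧ RightInverse g f ∧ ContDiff 𝕜 n g := by
  let f' : E → E ≃L[𝕜] F := fun x => .ofBijective (fderiv 𝕜 f x)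
    (LinearMap.ker_eq_bot.mpr (hf' x).1) (LinearMap.range_eq_top.mpr (hf' x).2)
  have hstrict : ∀ x, HasStrictFDerivAt f (f' x : E →L[𝕜] F) x := fun x => by
    rw [ContinuousLinearEquiv.coe_ofBijective]; exact hf.contDiffAt.hasStrictFDerivAt hn
  let e := (Equiv.ofBijective f hbij).toHomeomorphOfContinuousOpen hf.continuous
    (isOpenMap_of_hasStrictFDerivAt_equiv hstrict)
  exact ⟨e.symm, e.symm_apply_apply, e.apply_symm_apply,
    e.contDiff_symm (fun x => (hstrict x).hasFDerivAt) hf⟩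

section PathSup

open unitInterval

variable {X : Type*} [PseudoMetricSpace X]

noncomputable def pathSup (φ : X → ℝ) (γ : C(I, X)) : ℝ := ⨆ t, φ (γ t)

lemma le_pathSup {φ : X → ℝ} (hφ : Continuous φ) (γ : C(I, X)) (t : I) :
    φ (γ t) ≤ pathSup φ γ :=
  le_ciSup (isCompact_range (hφ.comp γ.continuous)).bddAbove t

lemma continuous_pathSup {φ : X → ℝ} (hφ : Continuous φ) : Continuous (pathSup φ) :=
  ContinuousMap.lipschitzWith_iSup.continuous.comp (ContinuousMap.continuous_postcomp ⟨φ, hφ⟩)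

end PathSup

section Variational

variable {X : Type*} [NormedAddCommGroup X] [NormedSpace ℝ X]

lemma neg_mul_norm_le_of_forall_sub_mul_dist_le {φ : X → ℝ} {D : X →L[ℝ] ℝ} {x : X}
    (hD : HasFDerivAt φ D x) {ε : ℝ} (hmin : ∀ z, φ x - ε * dist z x ≤ φ z) (v : X) :
    -(ε * ‖v‖) ≤ D v := by
  set g : ℝ → ℝ := fun t => φ (x + t • v) + t * (ε * ‖v‖)
  have hg : HasDerivAt g (D v + ε * ‖v‖) 0 := by
    have hline : HasDerivAt (fun t : ℝ => x + t • v) v 0 := by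
      simpa using ((hasDerivAt_id (0 : ℝ)).smul_const v).const_add x
    exact ((by simpa using hD : HasFDerivAt φ D (x + (0 : ℝ) • v)).comp_hasDerivAt 0 hline).add
      (by simpa using (hasDerivAt_id (0 : ℝ)).mul_const (ε * ‖v‖))
  have hg_min : IsLocalMinOn g (Ici 0) 0 := by
    filter_upwards [self_mem_nhdsWithin] with t (ht : 0 ≤ t)
    have := hmin (x + t • v)
    simp only [dist_eq_norm, add_sub_cancel_left, norm_smul, Real.norm_of_nonneg ht] at this
    simp only [g, zero_smul, add_zero, zero_mul]
    linarith
  have := hg_min.hasFDerivWithinAt_nonneg hg.hasFDerivAt.hasFDerivWithinAt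
    (mem_posTangentConeAt_of_segment_subset (y := (1 : ℝ))
      (by simp [segment_eq_Icc, Icc_subset_Ici_self]))
  linarith [show 0 ≤ D v + ε * ‖v‖ by simpa using this]

lemma norm_le_of_forall_sub_mul_dist_le {φ : X → ℝ} {D : X →L[ℝ] ℝ} {x : X}
    (hD : HasFDerivAt φ D x) {ε : ℝ} (hε : 0 ≤ ε) (hmin : ∀ z, φ x - ε * dist z x ≤ φ z) :
    ‖D‖ ≤ ε := by
  refine D.opNorm_le_bound hε fun v => abs_le.mpr ⟨?_, ?_⟩
  · exact neg_mul_norm_le_of_forall_sub_mul_dist_le hD hmin v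
  · simpa using neg_mul_norm_le_of_forall_sub_mul_dist_le hD hmin (-v)

def PalaisSmale (φ : X → ℝ) : Prop :=
  ∀ x : ℕ → X, (∃ C : ℝ, ∀ n : ℕ, |φ (x n)| ≤ C) →
    Tendsto (fun n => ‖fderiv ℝ φ (x n)‖) atTop (𝓝 0) →
    ∃ (z : X) (σ : ℕ → ℕ), StrictMono σ ∧ Tendsto (fun k => x (σ k)) atTop (𝓝 z)

def IsAlmostCriticalValue (φ : X → ℝ) (c : ℝ) : Prop :=
  ∀ ε > 0, ∃ x, |φ x - c| ≤ ε ∧ ‖fderiv ℝ φ x‖ ≤ ε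

theorem PalaisSmale.exists_eq_and_fderiv_eq_zero {φ : X → ℝ} {c : ℝ} (hPS : PalaisSmale φ)
    (hφ : ContDiff ℝ 1 φ) (hc : IsAlmostCriticalValue φ c) :
    ∃ z, φ z = c ∧ fderiv ℝ φ z = 0 := by
  choose x hx_val hx_grad using fun n : ℕ => hc (1 / (n + 1)) Nat.one_div_pos_of_nat
  have hu := tendsto_one_div_add_atTop_nhds_zero_nat (𝕜 := ℝ)
  have hval : Tendsto (fun n => φ (x n)) atTop (𝓝 c) :=
    tendsto_iff_dist_tendsto_zero.mpr (squeeze_zero (fun _ => dist_nonneg) hx_val hu)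
  have hgrad : Tendsto (fun n => ‖fderiv ℝ φ (x n)‖) atTop (𝓝 0) :=
    squeeze_zero (fun _ => norm_nonneg _) hx_grad hu
  have hbdd : ∃ C : ℝ, ∀ n, |φ (x n)| ≤ C := ⟨|c| + 1, fun n => by
    have : 1 / ((n : ℝ) + 1) ≤ 1 := div_le_one_of_le₀ (by simp) (by positivity)
    linarith [abs_sub_abs_le_abs_sub (φ (x n)) c, hx_val n]⟩
  obtain ⟨z, σ, hσ, hz⟩ := hPS x hbdd hgrad
  refine ⟨z, tendsto_nhds_unique ((hφ.continuous.tendsto z).comp hz) (hval.comp hσ.tendsto_atTop),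
    norm_eq_zero.mp (tendsto_nhds_unique ?_ (hgrad.comp hσ.tendsto_atTop))⟩
  exact ((hφ.continuous_fderiv one_ne_zero).norm.tendsto z).comp hz

theorem isAlmostCriticalValue_iInf [CompleteSpace X] {φ : X → ℝ} (hφ : Differentiable ℝ φ)
    (hbdd : BddBelow (range φ)) : IsAlmostCriticalValue φ (⨅ x, φ x) := by
  intro ε hε
  obtain ⟨x₀, hx₀⟩ := exists_lt_of_ciInf_lt (lt_add_of_pos_right (⨅ x, φ x) hε)
  obtain ⟨x, hx_le, hx_min⟩ := ekeland_variational_principle hφ.continuous hbdd hε x₀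
  refine ⟨x, abs_le.mpr ⟨?_, ?_⟩, norm_le_of_forall_sub_mul_dist_le (hφ x).hasFDerivAt hε.le hx_min⟩
  · linarith [ciInf_le hbdd x]
  · linarith

lemma ContinuousLinearMap.exists_norm_le_one_lt_apply {L : StrongDual ℝ X} {δ : ℝ}
    (h : δ < ‖L‖) : ∃ w : X, ‖w‖ ≤ 1 ∧ δ < L w := by
  obtain ⟨w, hw, hδw⟩ := L.exists_lt_apply_of_lt_opNorm h
  rcases le_or_gt 0 (L w) with hpos | hneg
  · exact ⟨w, hw.le, by rwa [Real.norm_of_nonneg hpos] at hδw⟩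
  · exact ⟨-w, by rw [norm_neg]; exact hw.le, by rwa [map_neg, ← Real.norm_of_nonpos hneg.le]⟩

theorem exists_continuous_pseudoGradient {T : Type*} [TopologicalSpace T] [NormalSpace T]
    [ParacompactSpace T] {L : T → StrongDual ℝ X} (hL : Continuous L) {A B : Set T}
    (hA : IsClosed A) (hB : IsClosed B) (hAB : Disjoint A B) {δ : ℝ} (hδ : 0 ≤ δ)
    (hgrad : ∀ t ∉ B, δ < ‖L t‖) :
    ∃ V : C(T, X), ∀ t, ‖V t‖ ≤ 1 ∧ 0 ≤ L t (V t) ∧ (t ∈ A → δ ≤ L t (V t)) ∧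
      (t ∈ B → V t = 0) := by
  refine exists_continuous_forall_mem_convex_of_local_const (t := fun t => {v : X | ‖v‖ ≤ 1 ∧
    0 ≤ L t v ∧ (t ∈ A → δ ≤ L t v) ∧ (t ∈ B → v = 0)}) (fun t => ?_) fun t => ?_
  · rintro v ⟨hv1, hv0, hvA, hvB⟩ w ⟨hw1, hw0, hwA, hwB⟩ a b ha hb hab
    refine ⟨?_, ?_, fun ht => ?_, fun ht => by simp [hvB ht, hwB ht]⟩
    · simpa using convex_closedBall (0 : X) 1 (by simpa using hv1) (by simpa using hw1) ha hb hab
    · simp only [map_add, map_smul, smul_eq_mul]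
      positivity
    · simp only [map_add, map_smul, smul_eq_mul]
      nlinarith [hvA ht, hwA ht]
  · by_cases ht : t ∈ B
    · refine ⟨0, Filter.mem_of_superset
        (hA.isOpen_compl.mem_nhds fun htA => hAB.notMem_of_mem_left htA ht) fun t' ht' =>
          ⟨by simp, by simp, fun h => absurd h ht', fun _ => rfl⟩⟩
    · obtain ⟨w, hw1, hw⟩ := (L t).exists_norm_le_one_lt_apply (hgrad t ht)
      have hopen : IsOpen {t' | δ < L t' w} :=
        isOpen_lt continuous_const (hL.clm_apply continuous_const)
      refine ⟨w, Filter.mem_of_superset ((hopen.inter hB.isOpen_compl).mem_nhds ⟨hw, ht⟩)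
        fun t' ⟨hw', hB'⟩ => ⟨hw1, hδ.trans hw'.le, fun _ => hw'.le, fun h => absurd h hB'⟩⟩

lemma image_sub_smul_le_of_norm_fderiv_sub_le {φ : X → ℝ} (hφ : Differentiable ℝ φ) {x v : X}
    {r s C : ℝ} (hC : ∀ y ∈ Metric.ball x r, ‖fderiv ℝ φ y - fderiv ℝ φ x‖ ≤ C) (hs : 0 ≤ s)
    (hsr : s < r) (hv : ‖v‖ ≤ 1) :
    φ (x - s • v) ≤ φ x - s * fderiv ℝ φ x v + s * C := by
  have hsv : ‖s • v‖ ≤ s := by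
    rw [norm_smul, Real.norm_of_nonneg hs]; exact mul_le_of_le_one_right hs hv
  have hmem : x - s • v ∈ Metric.ball x r := by
    rw [Metric.mem_ball, dist_eq_norm, sub_sub_cancel_left, norm_neg]
    exact hsv.trans_lt hsr
  have hmvt := (convex_ball x r).norm_image_sub_le_of_norm_fderiv_le' (fun y _ => hφ y) hC
    (Metric.mem_ball_self (hs.trans_lt hsr)) hmem
  have hC0 : 0 ≤ C := (norm_nonneg _).trans (hC x (Metric.mem_ball_self (hs.trans_lt hsr)))
  rw [sub_sub_cancel_left, norm_neg, map_neg, map_smul, smul_eq_mul] at hmvt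
  nlinarith [(abs_le.mp (Real.norm_eq_abs _ ▸ hmvt)).2, mul_le_mul_of_nonneg_left hsv hC0]

section MountainPass

open unitInterval

theorem exists_deformation_pathSup_le {φ : X → ℝ} (hφ : ContDiff ℝ 1 φ) (γ : C(I, X))
    {ε δ : ℝ} (hε : 0 < ε) (hδ : 0 < δ) (h0 : φ (γ 0) ≤ pathSup φ γ - 2 * ε)
    (h1 : φ (γ 1) ≤ pathSup φ γ - 2 * ε)
    (hgrad : ∀ t, pathSup φ γ - 2 * ε < φ (γ t) → δ < ‖fderiv ℝ φ (γ t)‖) :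
    ∃ γ' : C(I, X), γ' 0 = γ 0 ∧ γ' 1 = γ 1 ∧
      ∃ s > 0, dist γ' γ ≤ s ∧ pathSup φ γ' ≤ pathSup φ γ - s * δ / 2 := by
  set M := pathSup φ γ
  have hφγ : Continuous fun t => φ (γ t) := hφ.continuous.comp γ.continuous
  have hφ' : Continuous (fderiv ℝ φ) := hφ.continuous_fderiv one_ne_zero
  obtain ⟨V, hV⟩ := exists_continuous_pseudoGradient (L := fun t => fderiv ℝ φ (γ t))
    (hφ'.comp γ.continuous)
    (A := {t | M - ε ≤ φ (γ t)}) (B := {t | φ (γ t) ≤ M - 2 * ε})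
    (isClosed_le continuous_const hφγ) (isClosed_le hφγ continuous_const)
    (disjoint_left.mpr fun t (h1 : M - ε ≤ φ (γ t)) (h2 : φ (γ t) ≤ M - 2 * ε) => by linarith) hδ.le
    (fun t ht => hgrad t (not_le.mp ht))
  obtain ⟨r, hr, hr_cont⟩ := (isCompact_range γ.continuous).exists_pos_forall_dist_lt hφ'
    (show 0 < δ / 4 by positivity)
  -- `s < r` keeps the first-order error below `s * δ / 4`, and `s * δ ≤ ε` keeps the points
  -- below level `M - ε` (where only `0 ≤ φ' V` is known) under `M - s * δ / 2`.
  set s := min (r / 2) (ε / δ)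
  have hs : 0 < s := by positivity
  have hsr : s < r := (min_le_left _ _).trans_lt (half_lt_self hr)
  have hsδ : s * δ ≤ ε := (le_div_iff₀ hδ).mp (min_le_right _ _)
  refine ⟨⟨fun t => γ t - s • V t, by fun_prop⟩, by simp [(hV 0).2.2.2 h0],
    by simp [(hV 1).2.2.2 h1], s, hs, (ContinuousMap.dist_le hs.le).mpr fun t => ?_,
    ciSup_le fun t => ?_⟩
  · simpa [dist_eq_norm, norm_smul, abs_of_pos hs] using mul_le_of_le_one_right hs.le (hV t).1
  · obtain ⟨hV1, hV0, hVA, -⟩ := hV t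
    have hdec := image_sub_smul_le_of_norm_fderiv_sub_le (hφ.differentiable one_ne_zero)
      (fun y hy => dist_eq_norm (fderiv ℝ φ y) _ ▸ (hr_cont (γ t) ⟨t, rfl⟩ y hy).le) hs.le hsr hV1
    have hM : φ (γ t) ≤ M := le_pathSup hφ.continuous γ t
    change φ (γ t - s • V t) ≤ M - s * δ / 2
    by_cases ht : M - ε ≤ φ (γ t)
    · linarith [mul_le_mul_of_nonneg_left (hVA ht) hs.le, mul_pos hs hδ]
    · linarith [mul_nonneg hs.le hV0]

theorem exists_fderiv_le_of_forall_pathSup_le {φ : X → ℝ} (hφ : ContDiff ℝ 1 φ) {γ : C(I, X)}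
    {ε η : ℝ} (hε : 0 < ε) (hη : 0 < η) (h0 : φ (γ 0) ≤ pathSup φ γ - 2 * ε)
    (h1 : φ (γ 1) ≤ pathSup φ γ - 2 * ε)
    (hmin : ∀ γ' : C(I, X), γ' 0 = γ 0 → γ' 1 = γ 1 →
      pathSup φ γ - η * dist γ' γ ≤ pathSup φ γ') :
    ∃ t, pathSup φ γ - 2 * ε < φ (γ t) ∧ ‖fderiv ℝ φ (γ t)‖ ≤ 3 * η := by
  -- Otherwise a deformation moving `γ` by at most `s` lowers `pathSup` by `3 * η * s / 2 > η * s`.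
  by_contra! h
  obtain ⟨γ', h0', h1', s, hs, hdist, hsup⟩ :=
    exists_deformation_pathSup_le hφ γ hε (by positivity : 0 < 3 * η) h0 h1 h
  nlinarith [hmin γ' h0' h1', mul_le_mul_of_nonneg_left hdist hη.le]

theorem exists_isAlmostCriticalValue_of_mountainPass [CompleteSpace X] {φ : X → ℝ}
    (hφ : ContDiff ℝ 1 φ) {a b : X} {ρ : ℝ} (ha : φ a < ρ) (hb : φ b < ρ)
    (hsep : ∀ γ : C(I, X), γ 0 = a → γ 1 = b → ∃ t, ρ ≤ φ (γ t)) :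
    ∃ c, ρ ≤ c ∧ IsAlmostCriticalValue φ c := by
  set Γ : Set C(I, X) := {γ | γ 0 = a ∧ γ 1 = b}
  have : CompleteSpace Γ := ((isClosed_eq (continuous_eval_const 0) continuous_const).inter
    (isClosed_eq (continuous_eval_const 1) continuous_const)).completeSpace_coe
  have : Nonempty Γ := ⟨⟨(PathConnectedSpace.somePath a b).toContinuousMap, by simp, by simp⟩⟩
  have hΨ_ge : ∀ γ : Γ, ρ ≤ pathSup φ γ := fun γ =>
    let ⟨t, ht⟩ := hsep γ γ.2.1 γ.2.2
    ht.trans (le_pathSup hφ.continuous γ t)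
  have hbdd : BddBelow (range fun γ : Γ => pathSup φ γ) := ⟨ρ, forall_mem_range.mpr hΨ_ge⟩
  refine ⟨⨅ γ : Γ, pathSup φ γ, le_ciInf hΨ_ge, fun ε hε => ?_⟩
  obtain ⟨γ₀, hγ₀⟩ := exists_lt_of_ciInf_lt
    (lt_add_of_pos_right (⨅ γ : Γ, pathSup φ γ) (by positivity : 0 < ε / 3))
  obtain ⟨γ, hγ_le, hγ_min⟩ := ekeland_variational_principle
    ((continuous_pathSup hφ.continuous).comp continuous_subtype_val) hbdd
    (by positivity : 0 < ε / 3) γ₀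
  obtain ⟨κ, hκ, hκε, hκab⟩ : ∃ κ > 0, 2 * κ ≤ ε ∧ max (φ a) (φ b) ≤ ρ - 2 * κ :=
    ⟨min ε (ρ - max (φ a) (φ b)) / 2, by simp [hε, ha, hb],
      by linarith [min_le_left ε (ρ - max (φ a) (φ b))],
      by linarith [min_le_right ε (ρ - max (φ a) (φ b))]⟩
  obtain ⟨t, ht, hgrad⟩ := exists_fderiv_le_of_forall_pathSup_le hφ hκ (by positivity : 0 < ε / 3)
    (by rw [γ.2.1]; linarith [hΨ_ge γ, le_max_left (φ a) (φ b)])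
    (by rw [γ.2.2]; linarith [hΨ_ge γ, le_max_right (φ a) (φ b)])
    fun γ' h0 h1 => hγ_min ⟨γ', h0.trans γ.2.1, h1.trans γ.2.2⟩
  have hc : (⨅ γ : Γ, pathSup φ γ) ≤ pathSup φ γ := ciInf_le hbdd γ
  have hγ_le' : pathSup φ γ ≤ pathSup φ γ₀ := hγ_le
  have hγt := le_pathSup hφ.continuous γ t
  exact ⟨γ.1 t, abs_le.mpr ⟨by linarith, by linarith⟩, by linarith⟩

end MountainPass

theorem PalaisSmale.exists_mountainPass_critical_point [CompleteSpace X] {φ : X → ℝ}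
    (hPS : PalaisSmale φ) (hφ : ContDiff ℝ 1 φ) {a b : X} {ρ : ℝ} (ha : φ a < ρ) (hb : φ b < ρ)
    (hsep : ∀ γ : C(unitInterval, X), γ 0 = a → γ 1 = b → ∃ t, ρ ≤ φ (γ t)) :
    ∃ z, ρ ≤ φ z ∧ fderiv ℝ φ z = 0 :=
  let ⟨_, hρc, hc⟩ := exists_isAlmostCriticalValue_of_mountainPass hφ ha hb hsep
  let ⟨z, hz, hz'⟩ := hPS.exists_eq_and_fderiv_eq_zero hφ hc
  ⟨z, hz ▸ hρc, hz'⟩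

end Variational

lemma exists_norm_sub_eq_of_continuousMap {X : Type*} [SeminormedAddCommGroup X]
    (γ : C(unitInterval, X)) {r : ℝ} (h0 : 0 ≤ r) (h1 : r ≤ ‖γ 1 - γ 0‖) :
    ∃ t, ‖γ t - γ 0‖ = r :=
  intermediate_value_univ 0 1 (γ.continuous.sub continuous_const).norm (by simpa using ⟨h0, h1⟩)

section HalfNormSq

variable {X H : Type*} [NormedAddCommGroup X] [NormedSpace ℝ X]
  [NormedAddCommGroup H] [InnerProductSpace ℝ H]

lemma HasFDerivAt.half_norm_sub_sq {F : X → H} {F' : X →L[ℝ] H} {x : X} (hF : HasFDerivAt F F' x)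
    (y : H) :
    HasFDerivAt (fun z => (1 / 2 : ℝ) * ‖F z - y‖ ^ 2) ((innerSL ℝ (F x - y)).comp F') x := by
  refine ((hF.sub_const y).norm_sq.const_mul (1 / 2 : ℝ)).congr_fderiv ?_
  rw [← Nat.cast_smul_eq_nsmul ℝ, smul_smul]
  norm_num

lemma eq_of_fderiv_half_norm_sub_sq_eq_zero {F : X → H} {x : X} (hF : DifferentiableAt ℝ F x)
    (hsurj : Function.Surjective (fderiv ℝ F x)) {y : H}
    (hcrit : fderiv ℝ (fun z => (1 / 2 : ℝ) * ‖F z - y‖ ^ 2) x = 0) : F x = y := by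
  rw [(hF.hasFDerivAt.half_norm_sub_sq y).fderiv] at hcrit
  obtain ⟨u, hu⟩ := hsurj (F x - y)
  have := DFunLike.congr_fun hcrit u
  simp only [ContinuousLinearMap.comp_apply, innerSL_apply_apply, hu,
    zero_apply, inner_self_eq_zero] at this
  exact sub_eq_zero.mp this

lemma ContDiff.half_norm_sub_sq {F : X → H} {n : WithTop ℕ∞} (hF : ContDiff ℝ n F) (y : H) :
    ContDiff ℝ n fun z => (1 / 2 : ℝ) * ‖F z - y‖ ^ 2 :=
  contDiff_const.mul ((hF.sub contDiff_const).norm_sq ℝ)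

lemma HasFDerivAt.exists_norm_sub_le_mul_norm_sub [CompleteSpace X] [CompleteSpace H]
    {F : X → H} {F' : X →L[ℝ] H} {a : X} (hF : HasFDerivAt F F' a) (hF' : Bijective F') :
    ∃ r > 0, ∃ C > 0, ∀ x, ‖x - a‖ < r → ‖x - a‖ ≤ C * ‖F x - F a‖ := by
  let e : X ≃L[ℝ] H := .ofBijective F' (LinearMap.ker_eq_bot.mpr hF'.1)
    (LinearMap.range_eq_top.mpr hF'.2)
  obtain ⟨C, hC, hCO⟩ := (hF.isTheta_sub e.toHomeomorph.isInducing).isBigO_symm.exists_pos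
  obtain ⟨r, hr, hball⟩ := Metric.eventually_nhds_iff.mp (Asymptotics.isBigOWith_iff.mp hCO)
  exact ⟨r, hr, C, hC, fun x hx => hball (by rwa [dist_eq_norm])⟩

theorem surjective_of_palaisSmale_half_norm_sub_sq [CompleteSpace X] {F : X → H}
    (hF : ContDiff ℝ 1 F) (hPS : ∀ y, PalaisSmale fun z => (1 / 2 : ℝ) * ‖F z - y‖ ^ 2)
    (hF' : ∀ x, Surjective (fderiv ℝ F x)) : Surjective F := fun y => by
  have hφ := hF.half_norm_sub_sq y
  obtain ⟨z, -, hz⟩ := (hPS y).exists_eq_and_fderiv_eq_zero hφ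
    (isAlmostCriticalValue_iInf (hφ.differentiable one_ne_zero)
      ⟨0, forall_mem_range.mpr fun _ => by positivity⟩)
  exact ⟨z, eq_of_fderiv_half_norm_sub_sq_eq_zero (hF.differentiable one_ne_zero z) (hF' z) hz⟩

theorem injective_of_palaisSmale_half_norm_sub_sq [CompleteSpace X] [CompleteSpace H]
    {F : X → H} (hF : ContDiff ℝ 1 F)
    (hPS : ∀ y, PalaisSmale fun z => (1 / 2 : ℝ) * ‖F z - y‖ ^ 2)
    (hF' : ∀ x, Bijective (fderiv ℝ F x)) : Injective F := by
  intro a b hab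
  by_contra hne
  have hdiff := hF.differentiable one_ne_zero
  obtain ⟨r, hr, C, hC, hlower⟩ := (hdiff a).hasFDerivAt.exists_norm_sub_le_mul_norm_sub (hF' a)
  set r₀ := min (r / 2) ‖b - a‖
  have hr₀ : 0 < r₀ := lt_min (half_pos hr) (norm_pos_iff.mpr (sub_ne_zero.mpr (Ne.symm hne)))
  have hsphere : ∀ x, ‖x - a‖ = r₀ → (1 / 2 : ℝ) * (r₀ / C) ^ 2 ≤ (1 / 2) * ‖F x - F a‖ ^ 2 :=
    fun x hx => by
      have := hlower x (hx ▸ (min_le_left _ _).trans_lt (half_lt_self hr))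
      gcongr
      rw [div_le_iff₀' hC]
      linarith
  obtain ⟨z, hz, hcrit⟩ := (hPS (F a)).exists_mountainPass_critical_point
    (hF.half_norm_sub_sq (F a)) (a := a) (b := b) (ρ := (1 / 2) * (r₀ / C) ^ 2)
    (by simp; positivity) (by simp [← hab]; positivity) fun γ h0 h1 => by
      obtain ⟨t, ht⟩ := exists_norm_sub_eq_of_continuousMap γ hr₀.le
        (by rw [h0, h1]; exact min_le_right _ _)
      exact ⟨t, hsphere _ (h0 ▸ ht)⟩
  have hFz := eq_of_fderiv_half_norm_sub_sq_eq_zero (hdiff z) (hF' z).2 hcrit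
  simp only [hFz, sub_self, norm_zero] at hz
  nlinarith [sq_pos_of_pos (div_pos hr₀ hC)]

end HalfNormSq

/-- **Idczak–Skowron–Walczak global diffeomorphism theorem.**
Let `X` be a real Banach space and `H` a real Hilbert space.  If `F : X → H` is `C¹` and
(d1) for every `y ∈ H` the functional `φ x = ½‖F x − y‖²` satisfies the Palais–Smale
condition (every sequence with `φ(xₙ)` bounded and `φ′(xₙ) → 0` in `X*` has a convergent
subsequence), and
(d2) for every `x ∈ X` the derivative `F′(x)` is injective and surjective onto `H`,
then `F` is a diffeomorphism: bijective with a `C¹` inverse. -/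
theorem idczak_skowron_walczak_global_diffeomorphism
    {X H : Type*} [NormedAddCommGroup X] [NormedSpace ℝ X] [CompleteSpace X]
    [NormedAddCommGroup H] [InnerProductSpace ℝ H] [CompleteSpace H]
    (F : X → H) (hF : ContDiff ℝ 1 F)
    (hPS : ∀ y : H, ∀ x : ℕ → X,
      (∃ C : ℝ, ∀ n : ℕ, |(1/2 : ℝ) * ‖F (x n) - y‖^2| ≤ C) →
      Filter.Tendsto
        (fun n => ‖fderiv ℝ (fun z : X => (1/2 : ℝ) * ‖F z - y‖^2) (x n)‖)
        Filter.atTop (nhds 0) →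
      ∃ (z : X) (σ : ℕ → ℕ), StrictMono σ ∧
        Filter.Tendsto (fun k => x (σ k)) Filter.atTop (nhds z))
    (hd2 : ∀ x : X, Function.Bijective (fderiv ℝ F x)) :
    Function.Bijective F ∧
      ∃ G : H → X, Function.LeftInverse G F ∧ Function.RightInverse G F ∧ ContDiff ℝ 1 G := by
  have hbij : Bijective F := ⟨injective_of_palaisSmale_half_norm_sub_sq hF hPS hd2,
    surjective_of_palaisSmale_half_norm_sub_sq hF hPS fun x => (hd2 x).2⟩
  exact ⟨hbij, hF.exists_contDiff_inverse one_ne_zero hbij hd2⟩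
end

section
/- Assume f : [0,1] × ℝ → ℝ satisfies C(c): f is continuous on [0,1] × ℝ and has a continuous partial derivative f_x with respect to the second variable. Fix y ∈ L²(0,1). Then the functional φ : 𝕏 → ℝ defined by φ(x) := (1/2)∫₀¹ |ẍ(t) − f(t,x(t)) − y(t)|² dt is of class C¹, with derivative at any x ∈ 𝕏 given by φ′(x)h = ∫₀¹ (ẍ(t) − f(t,x(t)) − y(t)) (ḧ(t) − f_x(t,x(t)) h(t)) dt for all h ∈ 𝕏. -/
open MeasureTheory Set Filter

/-- Lebesgue measure restricted to `(0,1]`; `L²(0,1)` is `Lp ℝ 2 mu01`. -/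
noncomputable def mu01 : Measure ℝ := volume.restrict (Set.Ioc (0:ℝ) 1)

/-- The space `𝕏 = H²(0,1) ∩ H¹₀(0,1)`, normed by `‖x‖_𝕏 = ‖ẍ‖_{L²}`, is isometrically
parametrised by `u = ẍ ∈ L²(0,1)`:  given `u`, `PP u` is the unique function `x` with
`ẍ = u` a.e. and `x(0) = x(1) = 0`, namely
`x(t) = ∫₀ᵗ ∫₀ˢ u(r) dr ds − t ∫₀¹ ∫₀ˢ u(r) dr ds`. -/
noncomputable def PP (u : Lp ℝ 2 mu01) (t : ℝ) : ℝ :=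
  (∫ s in (0:ℝ)..t, ∫ r in (0:ℝ)..s, u r) - t * ∫ s in (0:ℝ)..1, ∫ r in (0:ℝ)..s, u r

open scoped Classical in
/-- The element of `L²(0,1)` determined by a (square-integrable) function `g`. -/
noncomputable def toL2 (g : ℝ → ℝ) : Lp ℝ 2 mu01 :=
  if hg : MemLp g 2 mu01 then hg.toLp g else 0

/-- The solution operator `T : 𝕏 → L²(0,1)`, `(T x)(t) = ẍ(t) − f(t, x(t))`, expressed
through the parametrisation `x = PP u`, `ẍ = u` of `𝕏` by `u ∈ L²(0,1)`. -/
noncomputable def Tmap (f : ℝ → ℝ → ℝ) (u : Lp ℝ 2 mu01) : Lp ℝ 2 mu01 :=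
  u - toL2 (fun t => f t (PP u t))

/-- The functional `φ : 𝕏 → ℝ`, `φ(x) = ½ ∫₀¹ |ẍ(t) − f(t,x(t)) − y(t)|² dt`, in the
parametrisation of `𝕏` by `u = ẍ ∈ L²(0,1)` (so `x = PP u`). -/
noncomputable def phi (f : ℝ → ℝ → ℝ) (y : ℝ → ℝ) (u : Lp ℝ 2 mu01) : ℝ :=
  (1/2 : ℝ) * ∫ t in (0:ℝ)..1, (u t - f t (PP u t) - y t)^2


/-!
In the parametrisation `x = PP u`, `φ(u) = ½ ‖u - N (PP u) - y‖²` in `L²`, where `N` is the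
Nemytskii operator `x ↦ f(·, x(·))`. The map `u ↦ PP u` is bounded linear `L² → C[0,1]`, being
`t ↦ ⟪G t, u⟫` for the continuous family `G t ∈ L²` of Green's functions of `ẍ = u`,
`x(0) = x(1) = 0`; on `C[0,1]` the operator `N` is `C¹` with derivative `h ↦ f_x(·, x) h`,
by the mean value inequality and the uniform continuity of `f_x` on compacts; and
`C[0,1] ↪ L²` is bounded linear. The chain rule concludes.
-/

open scoped InnerProductSpace ENNReal Topology

section Nemytskii

variable {K : Type*} [TopologicalSpace K]

noncomputable def nemytskii (g : C(K × ℝ, ℝ)) (x : C(K, ℝ)) : C(K, ℝ) :=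
  g.comp ((ContinuousMap.id K).prodMk x)

@[simp]
lemma nemytskii_apply (g : C(K × ℝ, ℝ)) (x : C(K, ℝ)) (k : K) :
    nemytskii g x k = g (k, x k) := rfl

lemma continuous_nemytskii [CompactSpace K] (g : C(K × ℝ, ℝ)) : Continuous (nemytskii g) :=
  ContinuousMap.continuous_of_continuous_uncurry _
    (g.continuous.comp (continuous_snd.prodMk continuous_eval))

lemma abs_sub_sub_mul_le_of_hasDerivAt {φ φ' : ℝ → ℝ} {a b ε : ℝ}
    (hφ : ∀ z, HasDerivAt φ (φ' z) z)
    (hε : ∀ τ ∈ Icc (0:ℝ) 1, |φ' (a + τ * b) - φ' a| ≤ ε) :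
    |φ (a + b) - φ a - φ' a * b| ≤ ε * |b| := by
  have hψ : ∀ τ ∈ Icc (0:ℝ) 1, HasDerivWithinAt (fun τ => φ (a + τ * b) - φ' a * (τ * b))
      ((φ' (a + τ * b) - φ' a) * b) (Icc 0 1) τ := by
    intro τ _
    have hline : HasDerivAt (fun τ => τ * b) b τ := hasDerivAt_mul_const b
    exact (((hφ _).comp τ (hline.const_add a)).sub (hline.const_mul (φ' a))).congr_deriv
      (by ring) |>.hasDerivWithinAt
  have := norm_image_sub_le_of_norm_deriv_le_segment_01' hψ fun τ hτ => by
    rw [Real.norm_eq_abs, abs_mul]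
    exact mul_le_mul_of_nonneg_right (hε τ (Ico_subset_Icc_self hτ)) (abs_nonneg b)
  rw [Real.norm_eq_abs] at this
  convert this using 2
  simp only [one_mul, zero_mul, add_zero, mul_zero, sub_zero]
  ring

lemma hasFDerivAt_nemytskii [CompactSpace K] {g gx : C(K × ℝ, ℝ)}
    (hg : ∀ k z, HasDerivAt (fun w => g (k, w)) (gx (k, z)) z) (x : C(K, ℝ)) :
    HasFDerivAt (nemytskii g) (ContinuousLinearMap.mul ℝ C(K, ℝ) (nemytskii gx x)) x := by
  -- Mean value inequality along `τ ↦ x + τ • h`; continuity of `nemytskii gx` at `x` makes the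
  -- derivative along the segment uniformly close to `gx (·, x ·)`.
  rw [hasFDerivAt_iff_isLittleO_nhds_zero, Asymptotics.isLittleO_iff]
  intro ε hε
  obtain ⟨δ, hδ, hgx⟩ := Metric.continuousAt_iff.1 (continuous_nemytskii gx).continuousAt ε hε
  filter_upwards [Metric.ball_mem_nhds 0 hδ] with h hh
  rw [mem_ball_zero_iff] at hh
  refine (ContinuousMap.norm_le _ (by positivity)).2 fun k => ?_
  have hτ : ∀ τ ∈ Icc (0:ℝ) 1, |gx (k, x k + τ * h k) - gx (k, x k)| ≤ ε := by
    intro τ hτ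
    have hclose : dist (x + τ • h) x < δ := by
      rw [dist_eq_norm, add_sub_cancel_left, norm_smul, Real.norm_eq_abs, abs_of_nonneg hτ.1]
      nlinarith [norm_nonneg h, hτ.2]
    have := ((nemytskii gx (x + τ • h) - nemytskii gx x).norm_coe_le_norm k).trans
      (dist_eq_norm (nemytskii gx (x + τ • h)) (nemytskii gx x) ▸ (hgx hclose).le)
    simpa using this
  simpa using (abs_sub_sub_mul_le_of_hasDerivAt (hg k) hτ).trans
    (mul_le_mul_of_nonneg_left (h.norm_coe_le_norm k) hε.le)

lemma contDiff_nemytskii [CompactSpace K] {g gx : C(K × ℝ, ℝ)}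
    (hg : ∀ k z, HasDerivAt (fun w => g (k, w)) (gx (k, z)) z) :
    ContDiff ℝ 1 (nemytskii g) :=
  contDiff_one_iff_hasFDerivAt.2 ⟨_,
    (ContinuousLinearMap.mul ℝ C(K, ℝ)).continuous.comp (continuous_nemytskii gx),
    hasFDerivAt_nemytskii hg⟩

end Nemytskii

section InnerFamily

variable {X E : Type*} [TopologicalSpace X] [CompactSpace X]
  [NormedAddCommGroup E] [InnerProductSpace ℝ E]

noncomputable def innerFamilyCLM (G : C(X, E)) : E →L[ℝ] C(X, ℝ) :=
  LinearMap.mkContinuous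
    { toFun := fun u => ⟨fun x => ⟪G x, u⟫_ℝ, by fun_prop⟩
      map_add' := fun u v => by ext; simp [inner_add_right]
      map_smul' := fun c u => by ext; simp [inner_smul_right] }
    ‖G‖ fun u => (ContinuousMap.norm_le _ (by positivity)).2 fun x =>
      (norm_inner_le_norm _ _).trans
        (mul_le_mul_of_nonneg_right (G.norm_coe_le_norm x) (norm_nonneg u))

@[simp]
lemma innerFamilyCLM_apply (G : C(X, E)) (u : E) (x : X) :
    innerFamilyCLM G u x = ⟪G x, u⟫_ℝ := rfl

end InnerFamily

section IccExtend

variable {a b : ℝ} (hab : a ≤ b) (p : ℝ≥0∞) [Fact (1 ≤ p)] (μ : Measure ℝ) [IsFiniteMeasure μ]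

noncomputable def iccExtendToLp : C(Icc a b, ℝ) →L[ℝ] Lp ℝ p μ :=
  (BoundedContinuousFunction.toLp p μ ℝ).comp <|
    (BoundedContinuousFunction.compContinuousCLM ℝ ℝ ⟨projIcc a b hab, continuous_projIcc⟩).comp
      (ContinuousMap.linearIsometryBoundedOfCompact _ ℝ ℝ).toLinearIsometry.toContinuousLinearMap

lemma coeFn_iccExtendToLp (x : C(Icc a b, ℝ)) :
    iccExtendToLp hab p μ x =ᵐ[μ] IccExtend hab x :=
  BoundedContinuousFunction.coeFn_toLp p μ ℝ
    ((ContinuousMap.linearIsometryBoundedOfCompact _ ℝ ℝ x).compContinuous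
      ⟨projIcc a b hab, continuous_projIcc⟩)

end IccExtend

instance : IsFiniteMeasure mu01 := ⟨by simp [mu01]⟩

lemma ae_mu01_mem_Icc : ∀ᵐ t ∂mu01, t ∈ Icc (0:ℝ) 1 :=
  (ae_restrict_mem measurableSet_Ioc).mono fun _ ht => Ioc_subset_Icc_self ht

lemma coeFn_toL2 {g : ℝ → ℝ} (hg : MemLp g 2 mu01) : toL2 g =ᵐ[mu01] g := by
  rw [toL2, dif_pos hg]
  exact hg.coeFn_toLp

lemma inner_eq_intervalIntegral {v w : Lp ℝ 2 mu01} {a b : ℝ → ℝ}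
    (hv : v =ᵐ[mu01] a) (hw : w =ᵐ[mu01] b) :
    ⟪v, w⟫_ℝ = ∫ t in (0:ℝ)..1, a t * b t := by
  rw [L2.inner_def, intervalIntegral.integral_of_le zero_le_one]
  refine integral_congr_ae ?_
  filter_upwards [hv, hw] with t hvt hwt
  simp [hvt, hwt, mul_comm]

noncomputable def indicatorIoc (s : ℝ) : Lp ℝ 2 mu01 :=
  indicatorConstLp 2 measurableSet_Ioc (measure_ne_top mu01 (Ioc 0 s)) 1

lemma continuous_indicatorIoc : Continuous indicatorIoc := by
  refine continuous_indicatorConstLp_set (by norm_num) fun s => ?_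
  have hle : ∀ r, mu01 (symmDiff (Ioc 0 r) (Ioc 0 s)) ≤ ENNReal.ofReal |s - r| := fun r => by
    rw [← Real.volume_uIoc]
    unfold mu01
    refine (Measure.restrict_le_self _).trans (measure_mono fun z hz => ?_)
    simp only [mem_symmDiff, mem_Ioc, mem_uIoc] at hz ⊢
    grind
  have hlim : Tendsto (fun r : ℝ => ENNReal.ofReal |s - r|) (𝓝 s) (𝓝 0) := by
    have : Continuous fun r : ℝ => ENNReal.ofReal |s - r| :=
      ENNReal.continuous_ofReal.comp (by fun_prop)
    simpa using this.tendsto s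
  exact tendsto_of_tendsto_of_tendsto_of_le_of_le tendsto_const_nhds hlim
    (fun _ => bot_le) hle

lemma intervalIntegral_eq_inner_indicatorIoc (u : Lp ℝ 2 mu01) {s : ℝ}
    (hs : s ∈ Icc (0:ℝ) 1) : ∫ r in (0:ℝ)..s, u r = ⟪indicatorIoc s, u⟫_ℝ := by
  rw [indicatorIoc, L2.inner_indicatorConstLp_one, intervalIntegral.integral_of_le hs.1]
  unfold mu01
  rw [Measure.restrict_restrict measurableSet_Ioc, Ioc_inter_Ioc, max_self, min_eq_left hs.2]

noncomputable def dirichletGreen (t : ℝ) : Lp ℝ 2 mu01 :=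
  (∫ s in (0:ℝ)..t, indicatorIoc s) - t • ∫ s in (0:ℝ)..1, indicatorIoc s

lemma continuous_dirichletGreen : Continuous dirichletGreen :=
  (intervalIntegral.continuous_primitive
    (fun _ _ => continuous_indicatorIoc.intervalIntegrable _ _) 0).sub
    (continuous_id.smul continuous_const)

lemma PP_eq_inner_dirichletGreen (u : Lp ℝ 2 mu01) {t : ℝ} (ht : t ∈ Icc (0:ℝ) 1) :
    PP u t = ⟪dirichletGreen t, u⟫_ℝ := by
  have hprim : ∀ t ∈ Icc (0:ℝ) 1,
      ∫ s in (0:ℝ)..t, ∫ r in (0:ℝ)..s, u r = ⟪∫ s in (0:ℝ)..t, indicatorIoc s, u⟫_ℝ := by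
    intro t ht
    calc ∫ s in (0:ℝ)..t, ∫ r in (0:ℝ)..s, u r = ∫ s in (0:ℝ)..t, ⟪indicatorIoc s, u⟫_ℝ := by
          refine intervalIntegral.integral_congr fun s hs => ?_
          rw [uIcc_of_le ht.1] at hs
          exact intervalIntegral_eq_inner_indicatorIoc u ⟨hs.1, hs.2.trans ht.2⟩
      _ = _ := ((innerSL ℝ).flip u).intervalIntegral_comp_comm
          (continuous_indicatorIoc.intervalIntegrable _ _)
  rw [PP, dirichletGreen, inner_sub_left, real_inner_smul_left, hprim t ht,
    hprim 1 (right_mem_Icc.2 zero_le_one)]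

noncomputable def PPCLM : Lp ℝ 2 mu01 →L[ℝ] C(Icc (0:ℝ) 1, ℝ) :=
  innerFamilyCLM ⟨fun t => dirichletGreen t, continuous_dirichletGreen.comp continuous_subtype_val⟩

lemma PPCLM_apply (u : Lp ℝ 2 mu01) (t : Icc (0:ℝ) 1) : PPCLM u t = PP u t := by
  rw [PPCLM, innerFamilyCLM_apply, PP_eq_inner_dirichletGreen u t.2]
  rfl

def restrictProdUniv (s : Set ℝ) (g : ℝ → ℝ → ℝ)
    (hg : ContinuousOn (fun p : ℝ × ℝ => g p.1 p.2) (s ×ˢ univ)) : C(s × ℝ, ℝ) :=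
  ⟨fun p => g p.1 p.2,
    hg.comp_continuous (continuous_subtype_val.prodMap continuous_id) fun p => ⟨p.1.2, trivial⟩⟩

@[simp]
lemma restrictProdUniv_apply (s : Set ℝ) (g : ℝ → ℝ → ℝ)
    (hg : ContinuousOn (fun p : ℝ × ℝ => g p.1 p.2) (s ×ˢ univ)) (p : s × ℝ) :
    restrictProdUniv s g hg p = g p.1 p.2 := rfl

noncomputable def phiResidual (F : C(Icc (0:ℝ) 1 × ℝ, ℝ)) (y : ℝ → ℝ) (u : Lp ℝ 2 mu01) :
    Lp ℝ 2 mu01 :=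
  u - iccExtendToLp zero_le_one 2 mu01 (nemytskii F (PPCLM u)) - toL2 y

lemma coeFn_iccExtendToLp_nemytskii (F : C(Icc (0:ℝ) 1 × ℝ, ℝ)) (u : Lp ℝ 2 mu01) :
    ∀ᵐ t ∂mu01, ∀ ht : t ∈ Icc (0:ℝ) 1,
      iccExtendToLp zero_le_one 2 mu01 (nemytskii F (PPCLM u)) t = F (⟨t, ht⟩, PP u t) := by
  filter_upwards [coeFn_iccExtendToLp zero_le_one 2 mu01 (nemytskii F (PPCLM u))] with t h ht
  rw [h, IccExtend_of_mem _ _ ht, nemytskii_apply, PPCLM_apply]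

lemma coeFn_phiResidual {f : ℝ → ℝ → ℝ} {y : ℝ → ℝ}
    (hf : ContinuousOn (fun p : ℝ × ℝ => f p.1 p.2) (Icc 0 1 ×ˢ univ)) (hy : MemLp y 2 mu01)
    (u : Lp ℝ 2 mu01) :
    phiResidual (restrictProdUniv _ f hf) y u =ᵐ[mu01] fun t => u t - f t (PP u t) - y t := by
  set v := iccExtendToLp zero_le_one 2 mu01 (nemytskii (restrictProdUniv _ f hf) (PPCLM u))
  filter_upwards [Lp.coeFn_sub (u - v) (toL2 y), Lp.coeFn_sub u v,
    coeFn_iccExtendToLp_nemytskii (restrictProdUniv _ f hf) u, coeFn_toL2 hy, ae_mu01_mem_Icc]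
    with t h₁ h₂ hv hy ht
  rw [phiResidual, h₁, Pi.sub_apply, h₂, Pi.sub_apply, hv ht, hy, restrictProdUniv_apply]

lemma hasFDerivAt_phiResidual {F Fx : C(Icc (0:ℝ) 1 × ℝ, ℝ)}
    (hF : ∀ k z, HasDerivAt (fun w => F (k, w)) (Fx (k, z)) z) (y : ℝ → ℝ) (u : Lp ℝ 2 mu01) :
    HasFDerivAt (phiResidual F y) (ContinuousLinearMap.id ℝ _ -
      (iccExtendToLp zero_le_one 2 mu01).comp
        ((ContinuousLinearMap.mul ℝ _ (nemytskii Fx (PPCLM u))).comp PPCLM)) u :=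
  ((hasFDerivAt_id u).sub ((iccExtendToLp zero_le_one 2 mu01).hasFDerivAt.comp u
    ((hasFDerivAt_nemytskii hF _).comp u PPCLM.hasFDerivAt))).sub_const _

lemma contDiff_phiResidual {F Fx : C(Icc (0:ℝ) 1 × ℝ, ℝ)}
    (hF : ∀ k z, HasDerivAt (fun w => F (k, w)) (Fx (k, z)) z) (y : ℝ → ℝ) :
    ContDiff ℝ 1 (phiResidual F y) :=
  (contDiff_id.sub ((iccExtendToLp zero_le_one 2 mu01).contDiff.comp
    ((contDiff_nemytskii hF).comp PPCLM.contDiff))).sub contDiff_const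

lemma phi_eq_half_norm_sq_phiResidual {f : ℝ → ℝ → ℝ} {y : ℝ → ℝ}
    (hf : ContinuousOn (fun p : ℝ × ℝ => f p.1 p.2) (Icc 0 1 ×ˢ univ)) (hy : MemLp y 2 mu01) :
    phi f y = fun u => (1/2 : ℝ) * ‖phiResidual (restrictProdUniv _ f hf) y u‖ ^ 2 := by
  funext u
  rw [phi, ← real_inner_self_eq_norm_sq,
    inner_eq_intervalIntegral (coeFn_phiResidual hf hy u) (coeFn_phiResidual hf hy u)]
  simp only [sq]

lemma HasFDerivAt.half_norm_sq {G F : Type*} [NormedAddCommGroup G] [NormedSpace ℝ G]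
    [NormedAddCommGroup F] [InnerProductSpace ℝ F] {R : G → F} {R' : G →L[ℝ] F} {x : G}
    (h : HasFDerivAt R R' x) :
    HasFDerivAt (fun x => (1/2 : ℝ) * ‖R x‖ ^ 2) ((innerSL ℝ (R x)).comp R') x := by
  refine (h.norm_sq.const_mul (1/2 : ℝ)).congr_fderiv ?_
  ext v
  simp

/-- Under C(c), for fixed `y ∈ L²(0,1)` the functional
`φ(x) = ½ ∫₀¹ |ẍ(t) − f(t,x(t)) − y(t)|² dt` on `𝕏` is `C¹`, with derivative
`φ′(x)h = ∫₀¹ (ẍ(t) − f(t,x(t)) − y(t)) (ḧ(t) − f_x(t,x(t)) h(t)) dt` for `h ∈ 𝕏`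
(the direction `h ∈ 𝕏` corresponds to `ḧ ∈ L²`, with `h = PP ḧ`). -/
theorem phi_is_C1_with_derivative
    (f fx : ℝ → ℝ → ℝ) (y : ℝ → ℝ) (hy : MemLp y 2 mu01)
    (hf_cont : ContinuousOn (fun p : ℝ × ℝ => f p.1 p.2) (Set.Icc 0 1 ×ˢ Set.univ))
    (hfx_deriv : ∀ t ∈ Set.Icc (0:ℝ) 1, ∀ z : ℝ, HasDerivAt (fun w => f t w) (fx t z) z)
    (hfx_cont : ContinuousOn (fun p : ℝ × ℝ => fx p.1 p.2) (Set.Icc 0 1 ×ˢ Set.univ)) :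
    ContDiff ℝ 1 (phi f y) ∧
    ∀ u h : Lp ℝ 2 mu01,
      fderiv ℝ (phi f y) u h
        = ∫ t in (0:ℝ)..1,
            (u t - f t (PP u t) - y t) * (h t - fx t (PP u t) * PP h t) := by
  set F := restrictProdUniv _ f hf_cont
  set Fx := restrictProdUniv _ fx hfx_cont
  have hF : ∀ k z, HasDerivAt (fun w => F (k, w)) (Fx (k, z)) z := fun k z => hfx_deriv k k.2 z
  rw [phi_eq_half_norm_sq_phiResidual hf_cont hy]
  refine ⟨contDiff_const.mul ((contDiff_phiResidual hF y).norm_sq ℝ), fun u h => ?_⟩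
  rw [(hasFDerivAt_phiResidual hF y u).half_norm_sq.fderiv]
  refine inner_eq_intervalIntegral (coeFn_phiResidual hf_cont hy u) ?_
  set v := iccExtendToLp zero_le_one 2 mu01 (nemytskii Fx (PPCLM u) * PPCLM h)
  filter_upwards [Lp.coeFn_sub h v, coeFn_iccExtendToLp zero_le_one 2 mu01 _, ae_mu01_mem_Icc]
    with t h₁ hv ht
  change ((h - v : Lp ℝ 2 mu01) : ℝ → ℝ) t = _
  rw [h₁, Pi.sub_apply, hv, IccExtend_of_mem _ _ ht, ContinuousMap.mul_apply, nemytskii_apply,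
    PPCLM_apply, PPCLM_apply, restrictProdUniv_apply]
end

section
/- Assume f : [0,1] × ℝ → ℝ satisfies C(c): f is continuous on [0,1] × ℝ with continuous partial derivative f_x with respect to the second variable, and C(f_x): inf over [0,1] × ℝ of f_x is > −π². Then for every fixed x ∈ 𝕏 and y ∈ L²(0,1), the linear Dirichlet problem ξ̈(t) = f_x(t, x(t)) ξ(t) + y(t) for a.e. t ∈ [0,1], ξ(0) = ξ(1) = 0, has exactly one solution ξ ∈ 𝕏. -/
/-!
With `q t = f_x(t, x(t))`, continuous on `[0,1]`, the initial value problem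
`ξ̈ = q ξ + y`, `ξ(0) = 0`, `ξ̇(0) = c` is the fixed-point equation
`ξ(t) = ∫₀ᵗ (c + ∫₀^σ (q ξ + y))` in `C([0,1])`. The `n`-th iterate of this Picard map is
Lipschitz with constant `Mⁿ / (2n)!` (`M = sup |q|`), so some iterate is a contraction and the
problem has exactly one solution. By linearity the solutions are `u + c v`, where `v` solves the
homogeneous problem with `v̇(0) = 1`. Comparing `v` with `sin (k t)` for some `k < π` with
`q + k² > 0`, the Wronskian shows that `v` has no zero in `(0,1]`; hence exactly one `c` gives
`ξ(1) = 0`.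
-/

open MeasureTheory Set Filter

/-- The `L²(0,1)` norm of a real function, `‖g‖_{L²} = (∫₀¹ g(t)² dt)^{1/2}`. -/
noncomputable def L2norm01 (g : ℝ → ℝ) : ℝ := Real.sqrt (∫ t in (0:ℝ)..1, (g t)^2)

/-- An element of `H²(0,1)`: an absolutely continuous function `x` on `[0,1]`
(represented as the integral of its weak derivative `dx`), whose derivative `dx` is
itself absolutely continuous with weak derivative `ddx ∈ L²(0,1)`. -/
structure H2fun where
  x : ℝ → ℝ
  dx : ℝ → ℝ
  ddx : ℝ → ℝ
  dx_int : IntervalIntegrable dx MeasureTheory.volume 0 1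
  ddx_memLp : MemLp ddx 2 (MeasureTheory.volume.restrict (Set.Ioc (0:ℝ) 1))
  x_rep : ∀ t ∈ Set.Icc (0:ℝ) 1, x t = x 0 + ∫ s in (0:ℝ)..t, dx s
  dx_rep : ∀ t ∈ Set.Icc (0:ℝ) 1, dx t = dx 0 + ∫ s in (0:ℝ)..t, ddx s

/-- An element of `𝕏 = H²(0,1) ∩ H¹₀(0,1)`: an `H²` function with
Dirichlet boundary conditions `x(0) = x(1) = 0`. -/
structure Xfun extends H2fun where
  bc0 : x 0 = 0
  bc1 : x 1 = 0

open Function intervalIntegral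
open scoped Topology Nat

theorem MeasureTheory.LocallyIntegrable.intervalIntegrable {E : Type*} [NormedAddCommGroup E]
    {μ : Measure ℝ} {g : ℝ → E} (hg : LocallyIntegrable g μ) (a b : ℝ) :
    IntervalIntegrable g μ a b :=
  (hg.integrableOn_isCompact isCompact_uIcc).intervalIntegrable

noncomputable def secondPrimitive (c : ℝ) (g : ℝ → ℝ) (t : ℝ) : ℝ :=
  ∫ σ in (0:ℝ)..t, (c + ∫ s in (0:ℝ)..σ, g s)

section SecondPrimitive

variable {g h : ℝ → ℝ}

theorem continuous_const_add_primitive (hg : LocallyIntegrable g volume) (c : ℝ) :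
    Continuous fun σ => c + ∫ s in (0:ℝ)..σ, g s :=
  continuous_const.add (continuous_primitive hg.intervalIntegrable 0)

theorem hasDerivAt_secondPrimitive (hg : LocallyIntegrable g volume) (c t : ℝ) :
    HasDerivAt (secondPrimitive c g) (c + ∫ s in (0:ℝ)..t, g s) t :=
  ((continuous_const_add_primitive hg c).integral_hasStrictDerivAt 0 t).hasDerivAt

theorem continuous_secondPrimitive (hg : LocallyIntegrable g volume) (c : ℝ) :
    Continuous (secondPrimitive c g) :=
  continuous_iff_continuousAt.2 fun t => (hasDerivAt_secondPrimitive hg c t).continuousAt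

@[simp]
theorem secondPrimitive_zero (c : ℝ) (g : ℝ → ℝ) : secondPrimitive c g 0 = 0 := by
  simp [secondPrimitive]

theorem secondPrimitive_add (hg : LocallyIntegrable g volume) (hh : LocallyIntegrable h volume)
    (c d t : ℝ) :
    secondPrimitive (c + d) (fun s => g s + h s) t =
      secondPrimitive c g t + secondPrimitive d h t := by
  rw [secondPrimitive, secondPrimitive, secondPrimitive, ← integral_add
    ((continuous_const_add_primitive hg c).intervalIntegrable _ _)
    ((continuous_const_add_primitive hh d).intervalIntegrable _ _)]
  refine integral_congr fun σ _ => ?_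
  rw [integral_add (hg.intervalIntegrable _ _) (hh.intervalIntegrable _ _)]
  ring

theorem secondPrimitive_sub (hg : LocallyIntegrable g volume) (hh : LocallyIntegrable h volume)
    (c t : ℝ) :
    secondPrimitive c g t - secondPrimitive c h t = secondPrimitive 0 (fun s => g s - h s) t := by
  rw [secondPrimitive, secondPrimitive, secondPrimitive, ← integral_sub
    ((continuous_const_add_primitive hg c).intervalIntegrable _ _)
    ((continuous_const_add_primitive hh c).intervalIntegrable _ _)]
  refine integral_congr fun σ _ => ?_
  rw [integral_sub (hg.intervalIntegrable _ _) (hh.intervalIntegrable _ _)]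
  ring

theorem secondPrimitive_const_mul (a c : ℝ) (g : ℝ → ℝ) (t : ℝ) :
    secondPrimitive (a * c) (fun s => a * g s) t = a * secondPrimitive c g t := by
  simp only [secondPrimitive, intervalIntegral.integral_const_mul, ← mul_add]

theorem secondPrimitive_congr_ae {g' : ℝ → ℝ} (hgg' : g =ᵐ[volume.restrict (Ioc 0 1)] g')
    (c : ℝ) {t : ℝ} (ht : t ∈ Icc (0:ℝ) 1) :
    secondPrimitive c g t = secondPrimitive c g' t := by
  refine integral_congr fun σ hσ => ?_
  rw [uIcc_of_le ht.1] at hσ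
  rw [intervalIntegral.integral_congr_ae (g := g')]
  rw [uIoc_of_le hσ.1]
  filter_upwards [(ae_restrict_iff' measurableSet_Ioc).1 hgg'] with s hs hsσ
  exact hs (Ioc_subset_Ioc_right (hσ.2.trans ht.2) hsσ)

theorem abs_secondPrimitive_le {K t : ℝ} {k : ℕ} (ht : 0 ≤ t)
    (hgK : ∀ s ∈ Icc 0 t, |g s| ≤ K * s ^ k) :
    |secondPrimitive 0 g t| ≤ K * t ^ (k + 2) / ((k + 1) * (k + 2)) := by
  have hinner : ∀ σ ∈ Icc 0 t, |∫ s in (0:ℝ)..σ, g s| ≤ K / (k + 1) * σ ^ (k + 1) := by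
    intro σ hσ
    calc |∫ s in (0:ℝ)..σ, g s| ≤ ∫ s in (0:ℝ)..σ, K * s ^ k :=
          norm_integral_le_of_norm_le (f := g) hσ.1
            (ae_of_all _ fun s hs => hgK s ⟨hs.1.le, hs.2.trans hσ.2⟩)
            ((by fun_prop : Continuous fun s : ℝ => K * s ^ k).intervalIntegrable _ _)
      _ = K / (k + 1) * σ ^ (k + 1) := by
          rw [intervalIntegral.integral_const_mul, integral_pow]; ring
  calc |secondPrimitive 0 g t| ≤ ∫ σ in (0:ℝ)..t, K / (k + 1) * σ ^ (k + 1) :=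
        norm_integral_le_of_norm_le (f := fun σ => 0 + ∫ s in (0:ℝ)..σ, g s) ht
          (ae_of_all _ fun σ hσ => by simpa using hinner σ ⟨hσ.1.le, hσ.2⟩)
          ((by fun_prop : Continuous fun σ : ℝ => K / (k + 1) * σ ^ (k + 1)).intervalIntegrable _ _)
    _ = K * t ^ (k + 2) / ((k + 1) * (k + 2)) := by
        rw [intervalIntegral.integral_const_mul, integral_pow]; push_cast; field_simp; ring

end SecondPrimitive

section Picard

variable {q ψ : ℝ → ℝ}

theorem locallyIntegrable_mul_IccExtend_add (hq : Continuous q)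
    (hψ : LocallyIntegrable ψ volume) (z : C(Icc (0:ℝ) 1, ℝ)) :
    LocallyIntegrable (fun s => q s * IccExtend zero_le_one z s + ψ s) volume :=
  (hq.mul z.continuous.Icc_extend').locallyIntegrable.add hψ

noncomputable def picardMap (hq : Continuous q) (hψ : LocallyIntegrable ψ volume) (c : ℝ)
    (z : C(Icc (0:ℝ) 1, ℝ)) : C(Icc (0:ℝ) 1, ℝ) where
  toFun t := secondPrimitive c (fun s => q s * IccExtend zero_le_one z s + ψ s) t
  continuous_toFun := (continuous_secondPrimitive
    (locallyIntegrable_mul_IccExtend_add hq hψ z) c).comp continuous_subtype_val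

variable (hq : Continuous q) (hψ : LocallyIntegrable ψ volume)

theorem picardMap_apply (c : ℝ) (z : C(Icc (0:ℝ) 1, ℝ)) (t : Icc (0:ℝ) 1) :
    picardMap hq hψ c z t = secondPrimitive c (fun s => q s * IccExtend zero_le_one z s + ψ s) t :=
  rfl

theorem abs_iterate_picardMap_sub_le {M : ℝ} (hM : ∀ s ∈ Icc (0:ℝ) 1, |q s| ≤ M) (c : ℝ)
    (n : ℕ) (z w : C(Icc (0:ℝ) 1, ℝ)) (t : Icc (0:ℝ) 1) :
    |(picardMap hq hψ c)^[n] z t - (picardMap hq hψ c)^[n] w t| ≤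
      M ^ n * dist z w * (t : ℝ) ^ (2 * n) / (2 * n)! := by
  induction n generalizing t with
  | zero => simpa [Real.dist_eq] using ContinuousMap.dist_apply_le_dist (f := z) (g := w) t
  | succ n ih =>
    set z' := (picardMap hq hψ c)^[n] z
    set w' := (picardMap hq hψ c)^[n] w
    have hM0 : 0 ≤ M := (abs_nonneg _).trans (hM 0 ⟨le_rfl, zero_le_one⟩)
    rw [iterate_succ_apply', iterate_succ_apply', picardMap_apply, picardMap_apply,
      secondPrimitive_sub (locallyIntegrable_mul_IccExtend_add hq hψ z')
        (locallyIntegrable_mul_IccExtend_add hq hψ w')]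
    refine (abs_secondPrimitive_le (K := M * (M ^ n * dist z w / (2 * n)!)) (k := 2 * n) t.2.1
      fun s hs => ?_).trans_eq ?_
    · have hsI : s ∈ Icc (0:ℝ) 1 := ⟨hs.1, hs.2.trans t.2.2⟩
      rw [IccExtend_of_mem _ _ hsI, IccExtend_of_mem _ _ hsI, add_sub_add_right_eq_sub,
        ← mul_sub, abs_mul]
      calc |q s| * |z' ⟨s, hsI⟩ - w' ⟨s, hsI⟩|
          ≤ M * (M ^ n * dist z w * s ^ (2 * n) / (2 * n)!) :=
            mul_le_mul (hM s hsI) (ih ⟨s, hsI⟩) (abs_nonneg _) hM0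
        _ = M * (M ^ n * dist z w / (2 * n)!) * s ^ (2 * n) := by ring
    · rw [show 2 * (n + 1) = 2 * n + 1 + 1 by ring, Nat.factorial_succ, Nat.factorial_succ]
      push_cast
      field_simp
      ring

theorem dist_iterate_picardMap_le {M : ℝ} (hM : ∀ s ∈ Icc (0:ℝ) 1, |q s| ≤ M) (c : ℝ) (n : ℕ)
    (z w : C(Icc (0:ℝ) 1, ℝ)) :
    dist ((picardMap hq hψ c)^[n] z) ((picardMap hq hψ c)^[n] w) ≤ M ^ n / n ! * dist z w := by
  have hM0 : 0 ≤ M := (abs_nonneg _).trans (hM 0 ⟨le_rfl, zero_le_one⟩)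
  refine (ContinuousMap.dist_le (by positivity)).2 fun t => ?_
  rw [Real.dist_eq]
  calc _ ≤ M ^ n * dist z w * (t : ℝ) ^ (2 * n) / (2 * n)! :=
        abs_iterate_picardMap_sub_le hq hψ hM c n z w t
    _ ≤ M ^ n * dist z w * 1 / n ! := by
        gcongr
        · exact pow_le_one₀ t.2.1 t.2.2
        · omega
    _ = M ^ n / n ! * dist z w := by ring

theorem exists_contractingWith_iterate_picardMap (c : ℝ) :
    ∃ (n : ℕ) (K : NNReal), ContractingWith K (picardMap hq hψ c)^[n] := by
  obtain ⟨M, hM⟩ := isCompact_Icc.exists_bound_of_continuousOn (hq.continuousOn (s := Icc 0 1))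
  have hM0 : 0 ≤ M := (norm_nonneg _).trans (hM 0 ⟨le_rfl, zero_le_one⟩)
  obtain ⟨n, hn⟩ :=
    ((FloorSemiring.tendsto_pow_div_factorial_atTop M).eventually_lt_const one_pos).exists
  exact ⟨n, ⟨M ^ n / n !, by positivity⟩, hn,
    LipschitzWith.of_dist_le_mul (dist_iterate_picardMap_le hq hψ hM c n)⟩

theorem existsUnique_isFixedPt_picardMap (c : ℝ) : ∃! z, IsFixedPt (picardMap hq hψ c) z := by
  obtain ⟨n, K, hK⟩ := exists_contractingWith_iterate_picardMap hq hψ c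
  exact ⟨_, hK.isFixedPt_fixedPoint_iterate, fun z hz => hK.fixedPoint_unique (hz.iterate n)⟩

theorem Function.IsFixedPt.picardMap_add_smul {c d : ℝ} {u v : C(Icc (0:ℝ) 1, ℝ)}
    (hu : IsFixedPt (picardMap hq hψ c) u)
    (hv : IsFixedPt (picardMap hq locallyIntegrable_zero d) v) (a : ℝ) :
    IsFixedPt (picardMap hq hψ (c + a * d)) (u + a • v) := by
  ext t
  calc picardMap hq hψ (c + a * d) (u + a • v) t
      = secondPrimitive (c + a * d) (fun s => (q s * IccExtend zero_le_one u s + ψ s) +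
          a * (q s * IccExtend zero_le_one v s + 0)) t := by
        rw [picardMap_apply]
        congr! 2 with s
        simp only [IccExtend, comp_apply, ContinuousMap.add_apply, ContinuousMap.smul_apply,
          smul_eq_mul]
        ring
    _ = picardMap hq hψ c u t + a * picardMap hq locallyIntegrable_zero d v t := by
        have hv' : LocallyIntegrable (fun s => a * (q s * IccExtend zero_le_one v s + 0)) volume :=
          (locallyIntegrable_mul_IccExtend_add hq locallyIntegrable_zero v).smul a
        rw [secondPrimitive_add (locallyIntegrable_mul_IccExtend_add hq hψ u) hv',
          secondPrimitive_const_mul, picardMap_apply, picardMap_apply]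
    _ = (u + a • v) t := by rw [hu.eq, hv.eq]; rfl

end Picard

section Sturm

variable {V V' q : ℝ → ℝ}

theorem HasDerivAt.eventually_lt_right {a d : ℝ} (hV : HasDerivAt V d a) (hd : 0 < d) :
    ∀ᶠ t in 𝓝[>] a, V a < V t := by
  have hslope := (hasDerivAt_iff_tendsto_slope.1 hV).mono_left (nhdsGT_le_nhdsNE a)
  filter_upwards [hslope.eventually (lt_mem_nhds hd), self_mem_nhdsWithin] with t ht hat
  rw [slope_def_field] at ht
  exact sub_pos.1 ((div_pos_iff_of_pos_right (sub_pos.2 hat)).1 ht)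

theorem HasDerivAt.nonpos_of_eventually_le_left {τ d : ℝ} (hV : HasDerivAt V d τ)
    (hle : ∀ᶠ t in 𝓝[<] τ, V τ ≤ V t) : d ≤ 0 := by
  have hslope := (hasDerivAt_iff_tendsto_slope.1 hV).mono_left (nhdsLT_le_nhdsNE τ)
  refine le_of_tendsto hslope ?_
  filter_upwards [hle, self_mem_nhdsWithin] with t ht htτ
  rw [slope_def_field]
  exact div_nonpos_of_nonneg_of_nonpos (sub_nonneg.2 ht) (sub_nonpos.2 (le_of_lt htτ))

theorem exists_first_zero {a b : ℝ} (hab : a < b) (hV : ContinuousOn V (Icc a b))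
    (hpos : ∀ᶠ t in 𝓝[>] a, 0 < V t) (hb : V b = 0) :
    ∃ τ ∈ Ioc a b, V τ = 0 ∧ ∀ t ∈ Ioo a τ, 0 < V t := by
  obtain ⟨u, hau, hu⟩ := mem_nhdsGT_iff_exists_Ioo_subset.1 hpos
  obtain ⟨e, hae, heu⟩ := exists_between (lt_min hau hab)
  have hpos_e : ∀ t ∈ Ioc a e, 0 < V t := fun t ht =>
    hu ⟨ht.1, ht.2.trans_lt (heu.trans_le (min_le_left _ _))⟩
  have heb : e ≤ b := (heu.trans_le (min_le_right _ _)).le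
  have hVe : ContinuousOn V (Icc e b) := hV.mono (Icc_subset_Icc_left hae.le)
  have hZ : IsCompact (Icc e b ∩ V ⁻¹' {0}) :=
    isCompact_Icc.of_isClosed_subset (hVe.preimage_isClosed_of_isClosed isClosed_Icc
      isClosed_singleton) inter_subset_left
  obtain ⟨τ, ⟨hτ, hVτ⟩, hτmin⟩ := hZ.exists_isLeast ⟨b, ⟨heb, le_rfl⟩, hb⟩
  refine ⟨τ, ⟨hae.trans_le hτ.1, hτ.2⟩, hVτ, fun t ht => ?_⟩
  rcases le_or_gt t e with hte | het
  · exact hpos_e t ⟨ht.1, hte⟩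
  by_contra! hVt
  obtain ⟨s, hs, hVs⟩ := intermediate_value_Icc' het.le (hVe.mono (Icc_subset_Icc_right
    (ht.2.le.trans hτ.2))) ⟨hVt, (hpos_e e ⟨hae, le_rfl⟩).le⟩
  have := hτmin ⟨⟨hs.1, hs.2.trans (ht.2.le.trans hτ.2)⟩, hVs⟩
  linarith [hs.2, ht.2]

theorem hasDerivAt_wronskian_sin {k t : ℝ} (hV : HasDerivAt V (V' t) t)
    (hV' : HasDerivAt V' (q t * V t) t) :
    HasDerivAt (fun t => V' t * Real.sin (k * t) - V t * (k * Real.cos (k * t)))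
      ((q t + k ^ 2) * V t * Real.sin (k * t)) t := by
  have hk : HasDerivAt (fun t => k * t) k t := by simpa using (hasDerivAt_id t).const_mul k
  have hsin := (Real.hasDerivAt_sin (k * t)).comp t hk
  have hcos := ((Real.hasDerivAt_cos (k * t)).comp t hk).const_mul k
  refine ((hV'.mul hsin).sub (hV.mul hcos)).congr_deriv ?_
  simp only [comp_apply]
  ring

theorem sturm_apply_one_ne_zero {m : ℝ} (hm : -Real.pi ^ 2 < m)
    (hqm : ∀ t ∈ Icc (0:ℝ) 1, m ≤ q t)
    (hV : ∀ t ∈ Icc (0:ℝ) 1, HasDerivAt V (V' t) t)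
    (hV' : ∀ t ∈ Icc (0:ℝ) 1, HasDerivAt V' (q t * V t) t)
    (h0 : V 0 = 0) (h0' : V' 0 = 1) : V 1 ≠ 0 := by
  intro hV1
  -- `k < π` keeps `sin (k t)` positive on `(0, 1]`; `q + k² > 0` makes the Wronskian `W` of
  -- `V` and `sin (k t)` increase as long as `V > 0`.
  obtain ⟨k, hk, hkπ⟩ := exists_between (show √(max (-m) 0) < Real.pi from
    (Real.sqrt_lt' Real.pi_pos).2 (max_lt (by linarith) (by positivity)))
  have hk0 : 0 < k := (Real.sqrt_nonneg _).trans_lt hk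
  have hkm : -m < k ^ 2 := (le_max_left _ _).trans_lt ((Real.sqrt_lt' hk0).1 hk)
  have hcont : ContinuousOn V (Icc 0 1) := fun t ht =>
    (hV t ht).continuousAt.continuousWithinAt
  obtain ⟨τ, ⟨hτ0, hτ1⟩, hVτ, hpos⟩ := exists_first_zero one_pos hcont
    (by simpa [h0] using (hV 0 ⟨le_rfl, zero_le_one⟩).eventually_lt_right (h0' ▸ one_pos)) hV1
  have hsin : ∀ t ∈ Ioc 0 τ, 0 < Real.sin (k * t) := fun t ht =>
    Real.sin_pos_of_pos_of_lt_pi (mul_pos hk0 ht.1)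
      (lt_of_le_of_lt (by nlinarith [ht.2]) hkπ)
  set W := fun t => V' t * Real.sin (k * t) - V t * (k * Real.cos (k * t))
  have hsub : Icc 0 τ ⊆ Icc 0 1 := Icc_subset_Icc_right hτ1
  have hW : StrictMonoOn W (Icc 0 τ) := by
    refine strictMonoOn_of_deriv_pos (convex_Icc 0 τ) (fun t ht =>
      (hasDerivAt_wronskian_sin (hV t (hsub ht)) (hV' t (hsub ht))).continuousAt
        |>.continuousWithinAt) fun t ht => ?_
    rw [interior_Icc] at ht
    rw [(hasDerivAt_wronskian_sin (hV t (hsub (Ioo_subset_Icc_self ht)))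
      (hV' t (hsub (Ioo_subset_Icc_self ht)))).deriv]
    have := hqm t (hsub (Ioo_subset_Icc_self ht))
    exact mul_pos (mul_pos (by linarith) (hpos t ht)) (hsin t ⟨ht.1, ht.2.le⟩)
  have hWτ : 0 < V' τ * Real.sin (k * τ) := by
    simpa [W, h0, hVτ] using hW ⟨le_rfl, hτ0.le⟩ ⟨hτ0.le, le_rfl⟩ hτ0
  have hV'τ : V' τ ≤ 0 := (hV τ ⟨hτ0.le, hτ1⟩).nonpos_of_eventually_le_left <| by
    filter_upwards [Ioo_mem_nhdsLT hτ0] with t ht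
    exact hVτ ▸ (hpos t ht).le
  nlinarith [hsin τ ⟨hτ0, le_rfl⟩]

end Sturm

theorem Function.IsFixedPt.picardMap_apply_one_ne_zero {q : ℝ → ℝ} (hq : Continuous q) {m : ℝ}
    (hm : -Real.pi ^ 2 < m) (hqm : ∀ t ∈ Icc (0:ℝ) 1, m ≤ q t) {v : C(Icc (0:ℝ) 1, ℝ)}
    (hv : IsFixedPt (picardMap hq locallyIntegrable_zero 1) v) : v 1 ≠ 0 := by
  set g := fun s => q s * IccExtend zero_le_one v s + 0
  have hg : Continuous g := (hq.mul v.continuous.Icc_extend').add continuous_const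
  have hV : ∀ t (ht : t ∈ Icc (0:ℝ) 1), secondPrimitive 1 g t = v ⟨t, ht⟩ := fun t ht => by
    rw [← hv.eq]; rfl
  have hV' : ∀ t ∈ Icc (0:ℝ) 1,
      HasDerivAt (fun t => 1 + ∫ s in (0:ℝ)..t, g s) (q t * secondPrimitive 1 g t) t :=
    fun t ht => by
      rw [hV t ht]
      simpa [g, IccExtend_of_mem _ _ ht] using
        (hg.integral_hasStrictDerivAt 0 t).hasDerivAt.const_add 1
  have := sturm_apply_one_ne_zero hm hqm
    (fun t _ => hasDerivAt_secondPrimitive hg.locallyIntegrable 1 t) hV'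
    (secondPrimitive_zero 1 g) (by simp)
  rwa [hV 1 ⟨zero_le_one, le_rfl⟩] at this

theorem H2fun.continuousOn_x (ξ : H2fun) : ContinuousOn ξ.x (Icc 0 1) := by
  have hprim := continuousOn_primitive_interval' ξ.dx_int (left_mem_uIcc (a := (0:ℝ)) (b := 1))
  rw [uIcc_of_le zero_le_one] at hprim
  exact (continuousOn_const.add hprim).congr fun t ht => ξ.x_rep t ht

theorem Xfun.x_eq_secondPrimitive (ξ : Xfun) {t : ℝ} (ht : t ∈ Icc (0:ℝ) 1) :
    ξ.x t = secondPrimitive (ξ.dx 0) ξ.ddx t := by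
  rw [ξ.x_rep t ht, ξ.bc0, zero_add, secondPrimitive]
  refine integral_congr fun σ hσ => ?_
  rw [uIcc_of_le ht.1] at hσ
  exact ξ.dx_rep σ ⟨hσ.1, hσ.2.trans ht.2⟩

noncomputable def Xfun.ofSecondPrimitive (c : ℝ) {g : ℝ → ℝ} (hg : LocallyIntegrable g volume)
    (hg2 : MemLp g 2 (volume.restrict (Ioc 0 1))) (h1 : secondPrimitive c g 1 = 0) : Xfun where
  x := secondPrimitive c g
  dx t := c + ∫ s in (0:ℝ)..t, g s
  ddx := g
  dx_int := (continuous_const_add_primitive hg c).intervalIntegrable 0 1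
  ddx_memLp := hg2
  x_rep _ _ := by rw [secondPrimitive_zero, zero_add]; rfl
  dx_rep _ _ := by simp
  bc0 := secondPrimitive_zero c g
  bc1 := h1

section DirichletProblem

variable {q ψ : ℝ → ℝ} (hq : Continuous q) (hψ : LocallyIntegrable ψ volume)

theorem Xfun.isFixedPt_picardMap (ξ : Xfun)
    (hξ : ξ.ddx =ᵐ[volume.restrict (Ioc 0 1)] fun t => q t * ξ.x t + ψ t) :
    IsFixedPt (picardMap hq hψ (ξ.dx 0))
      ⟨(Icc 0 1).domRestrict ξ.x, ξ.continuousOn_x.domRestrict⟩ := by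
  ext t
  rw [picardMap_apply]
  change _ = ξ.x t
  rw [ξ.x_eq_secondPrimitive t.2]
  refine secondPrimitive_congr_ae ?_ _ t.2
  filter_upwards [hξ, ae_restrict_mem measurableSet_Ioc] with s hs hsI
  rw [hs, IccExtend_of_mem _ _ (Ioc_subset_Icc_self hsI)]
  rfl

theorem Xfun.x_eq_of_isFixedPt {u v : C(Icc (0:ℝ) 1, ℝ)} (hu : IsFixedPt (picardMap hq hψ 0) u)
    (hv : IsFixedPt (picardMap hq locallyIntegrable_zero 1) v) (hv1 : v 1 ≠ 0) (ξ : Xfun)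
    (hξ : ξ.ddx =ᵐ[volume.restrict (Ioc 0 1)] fun t => q t * ξ.x t + ψ t)
    {t : ℝ} (ht : t ∈ Icc (0:ℝ) 1) :
    ξ.x t = u ⟨t, ht⟩ + (-u 1 / v 1) * v ⟨t, ht⟩ := by
  have heq := (existsUnique_isFixedPt_picardMap hq hψ (ξ.dx 0)).unique
    (ξ.isFixedPt_picardMap hq hψ hξ) (by simpa using hu.picardMap_add_smul hq hψ hv (ξ.dx 0))
  have h1 : u 1 + ξ.dx 0 * v 1 = 0 := by
    simpa [ξ.bc1] using (congrArg (· 1) heq).symm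
  have hc : ξ.dx 0 = -u 1 / v 1 := by field_simp; linarith
  simpa [hc] using congrArg (· ⟨t, ht⟩) heq

theorem exists_xfun_ddx_eq (hψ2 : MemLp ψ 2 (volume.restrict (Ioc 0 1)))
    {u v : C(Icc (0:ℝ) 1, ℝ)} (hu : IsFixedPt (picardMap hq hψ 0) u)
    (hv : IsFixedPt (picardMap hq locallyIntegrable_zero 1) v) (hv1 : v 1 ≠ 0) :
    ∃ ξ : Xfun, ∀ t ∈ Icc (0:ℝ) 1, ξ.ddx t = q t * ξ.x t + ψ t := by
  set c := -u 1 / v 1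
  set z := u + c • v
  have hz : IsFixedPt (picardMap hq hψ c) z := by simpa using hu.picardMap_add_smul hq hψ hv c
  have hz1 : z 1 = 0 := by simp [z, c, neg_div, div_mul_cancel₀ _ hv1]
  set g := fun s => q s * IccExtend zero_le_one z s + ψ s
  have hx : ∀ t ∈ Icc (0:ℝ) 1, secondPrimitive c g t = IccExtend zero_le_one z t :=
    fun t ht => by rw [IccExtend_of_mem _ _ ht, ← hz.eq]; rfl
  have hqz : Continuous fun s => q s * IccExtend zero_le_one z s := hq.mul z.continuous.Icc_extend'
  obtain ⟨C, hC⟩ := isCompact_Icc.exists_bound_of_continuousOn (hqz.continuousOn (s := Icc 0 1))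
  have hg2 : MemLp g 2 (volume.restrict (Ioc 0 1)) :=
    (MemLp.of_bound hqz.aestronglyMeasurable C ((ae_restrict_iff' measurableSet_Ioc).2
      (ae_of_all _ fun t ht => hC t (Ioc_subset_Icc_self ht)))).add hψ2
  refine ⟨Xfun.ofSecondPrimitive c (locallyIntegrable_mul_IccExtend_add hq hψ z) hg2 ?_,
    fun t ht => ?_⟩
  · rw [hx 1 ⟨zero_le_one, le_rfl⟩, IccExtend_of_mem _ _ ⟨zero_le_one, le_rfl⟩]
    exact hz1
  · change g t = q t * secondPrimitive c g t + ψ t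
    rw [hx t ht]

end DirichletProblem

theorem linear_dirichlet_problem_unique_solution_general
    (fx : ℝ → ℝ → ℝ)
    (hfx_cont : ContinuousOn (fun p : ℝ × ℝ => fx p.1 p.2) (Set.Icc 0 1 ×ˢ Set.univ))
    (hfx_lb : ∃ m : ℝ, -(Real.pi^2) < m ∧ ∀ t ∈ Set.Icc (0:ℝ) 1, ∀ z : ℝ, m ≤ fx t z)
    (x : Xfun) (y : ℝ → ℝ)
    (hy : MemLp y 2 (volume.restrict (Set.Ioc (0:ℝ) 1))) :
    (∃ ξ : Xfun,
        ∀ᵐ t ∂(volume.restrict (Set.Ioc (0:ℝ) 1)),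
          ξ.ddx t = fx t (x.x t) * ξ.x t + y t) ∧
    (∀ ξ η : Xfun,
        (∀ᵐ t ∂(volume.restrict (Set.Ioc (0:ℝ) 1)),
          ξ.ddx t = fx t (x.x t) * ξ.x t + y t) →
        (∀ᵐ t ∂(volume.restrict (Set.Ioc (0:ℝ) 1)),
          η.ddx t = fx t (x.x t) * η.x t + y t) →
        ∀ t ∈ Set.Icc (0:ℝ) 1, ξ.x t = η.x t) := by
  obtain ⟨m, hm, hfx_m⟩ := hfx_lb
  set q := IccExtend zero_le_one fun t : Icc (0:ℝ) 1 => fx t (x.x t)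
  have hq : Continuous q := Continuous.Icc_extend' <| hfx_cont.comp_continuous
    (continuous_subtype_val.prodMk x.continuousOn_x.domRestrict) fun t => ⟨t.2, mem_univ _⟩
  have hq_eq : ∀ t ∈ Icc (0:ℝ) 1, q t = fx t (x.x t) := fun t ht => IccExtend_of_mem _ _ ht
  set ψ := (Ioc (0:ℝ) 1).indicator y
  have hψ : LocallyIntegrable ψ volume :=
    ((integrable_indicator_iff measurableSet_Ioc).2 (hy.integrable one_le_two)).locallyIntegrable
  have hode : ∀ ξ : Xfun,
      (∀ᵐ t ∂(volume.restrict (Ioc 0 1)), ξ.ddx t = fx t (x.x t) * ξ.x t + y t) ↔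
        ξ.ddx =ᵐ[volume.restrict (Ioc 0 1)] fun t => q t * ξ.x t + ψ t := fun ξ => by
    refine eventually_congr ((ae_restrict_mem measurableSet_Ioc).mono fun t ht => ?_)
    simp only [hq_eq t (Ioc_subset_Icc_self ht), ψ, indicator_of_mem ht]
  obtain ⟨u, hu, -⟩ := existsUnique_isFixedPt_picardMap hq hψ 0
  obtain ⟨v, hv, -⟩ := existsUnique_isFixedPt_picardMap hq locallyIntegrable_zero 1
  have hv1 : v 1 ≠ 0 :=
    hv.picardMap_apply_one_ne_zero hq hm fun t ht => hq_eq t ht ▸ hfx_m t ht _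
  refine ⟨?_, fun ξ η hξ hη t ht => ?_⟩
  · obtain ⟨ξ, hξ⟩ := exists_xfun_ddx_eq hq hψ
      (hy.ae_eq (indicator_ae_eq_restrict measurableSet_Ioc).symm) hu hv hv1
    exact ⟨ξ, (hode ξ).2 (ae_restrict_of_forall_mem measurableSet_Ioc
      fun t ht => hξ t (Ioc_subset_Icc_self ht))⟩
  · rw [ξ.x_eq_of_isFixedPt hq hψ hu hv hv1 ((hode ξ).1 hξ) ht,
      η.x_eq_of_isFixedPt hq hψ hu hv hv1 ((hode η).1 hη) ht]

/-- Under C(c) and C(f_x) (`inf f_x > −π²`), for every fixed `x ∈ 𝕏` and `y ∈ L²(0,1)`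
the linear Dirichlet problem `ξ̈(t) = f_x(t,x(t)) ξ(t) + y(t)` a.e. on `[0,1]`,
`ξ(0) = ξ(1) = 0`, has exactly one solution `ξ ∈ 𝕏 = H²(0,1) ∩ H¹₀(0,1)`
(uniqueness meaning any two solutions coincide on `[0,1]`). -/
theorem linear_dirichlet_problem_unique_solution
    (f fx : ℝ → ℝ → ℝ)
    (hf_cont : ContinuousOn (fun p : ℝ × ℝ => f p.1 p.2) (Set.Icc 0 1 ×ˢ Set.univ))
    (hfx_deriv : ∀ t ∈ Set.Icc (0:ℝ) 1, ∀ z : ℝ, HasDerivAt (fun w => f t w) (fx t z) z)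
    (hfx_cont : ContinuousOn (fun p : ℝ × ℝ => fx p.1 p.2) (Set.Icc 0 1 ×ˢ Set.univ))
    (hfx_lb : ∃ m : ℝ, -(Real.pi^2) < m ∧ ∀ t ∈ Set.Icc (0:ℝ) 1, ∀ z : ℝ, m ≤ fx t z)
    (x : Xfun) (y : ℝ → ℝ)
    (hy : MemLp y 2 (volume.restrict (Set.Ioc (0:ℝ) 1))) :
    (∃ ξ : Xfun,
        ∀ᵐ t ∂(volume.restrict (Set.Ioc (0:ℝ) 1)),
          ξ.ddx t = fx t (x.x t) * ξ.x t + y t) ∧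
    (∀ ξ η : Xfun,
        (∀ᵐ t ∂(volume.restrict (Set.Ioc (0:ℝ) 1)),
          ξ.ddx t = fx t (x.x t) * ξ.x t + y t) →
        (∀ᵐ t ∂(volume.restrict (Set.Ioc (0:ℝ) 1)),
          η.ddx t = fx t (x.x t) * η.x t + y t) →
        ∀ t ∈ Set.Icc (0:ℝ) 1, ξ.x t = η.x t) :=
  linear_dirichlet_problem_unique_solution_general fx hfx_cont hfx_lb x y hy
end

section
/- Fix N ∈ ℕ, N ≥ 2, let v : [0,1] → ℝ be continuous, and assume f : [0,1] × ℝ → ℝ satisfies: C(c): f is continuous on [0,1] × ℝ with continuous partial derivative f_x with respect to the second variable; D(f): there exist positive constants A, B with A < 1 such that |f(t,x)| ≤ A|x| + B for all t ∈ [0,1], x ∈ ℝ; D(f_x): inf over [0,1] × ℝ of f_x is > −1. Then the discrete Dirichlet problem Δ²x(k−1) = (1/N²) f(k/N, x(k)) + (1/N²) v(k/N) for k = 1,…,N−1, x(0) = x(N) = 0, has a unique solution in 𝔼_N. -/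
/-!
Uniqueness is an energy estimate: for the difference `d` of two solutions, summation by parts
turns `∑ d(k) Δ²d(k-1)` into `-∑ (Δd)²`, the one-sided bound `f_x ≥ m` gives
`∑ (Δd)² ≤ -m/N² ∑ d²`, and the discrete Poincaré inequality `∑ d² ≤ N² ∑ (Δd)²` forces
`(1 + m) ∑ d² ≤ 0`.

Existence is by shooting: solve the recursion from `x(0) = 0`, `x(1) = s`. Summing the
equation twice, the growth bound with `A < 1` gives `|x(N) - N s| ≤ (A N |s| + C) / (2 - A)`
with `A N / (2 - A) < N`, so `s ↦ x(N)` changes sign and vanishes somewhere by continuity.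
-/

open Finset

namespace DiscreteDirichlet

/-- `secondDiff x k` is the paper's `Δ²x(k)`, centred at `k + 1`. -/
def secondDiff (x : ℕ → ℝ) (k : ℕ) : ℝ := x (k + 2) - 2 * x (k + 1) + x k

lemma sum_sq_sub_add_mul_secondDiff (d : ℕ → ℝ) (M : ℕ) :
    ∑ k ∈ range M, ((d (k + 1) - d k) ^ 2 + d (k + 1) * secondDiff d k)
      = d M * (d (M + 1) - d M) - d 0 * (d 1 - d 0) := by
  induction M with
  | zero => simp
  | succ n ih => rw [sum_range_succ, ih, secondDiff]; ring

lemma sum_sq_sub_eq_neg_sum_mul_secondDiff (d : ℕ → ℝ) (M : ℕ) (h0 : d 0 = 0)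
    (hM : d (M + 1) = 0) :
    ∑ k ∈ range (M + 1), (d (k + 1) - d k) ^ 2 = -∑ k ∈ range M, d (k + 1) * secondDiff d k := by
  have h := sum_sq_sub_add_mul_secondDiff d M
  rw [sum_add_distrib, h0, hM] at h
  rw [sum_range_succ, hM]
  linear_combination h

lemma sq_le_mul_sum_sq_sub (d : ℕ → ℝ) (h0 : d 0 = 0) (n : ℕ) :
    d n ^ 2 ≤ n * ∑ j ∈ range n, (d (j + 1) - d j) ^ 2 := by
  have h := sq_sum_le_card_mul_sum_sq (s := range n) (f := fun j => d (j + 1) - d j)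
  rwa [sum_range_sub, h0, sub_zero, card_range] at h

lemma eq_zero_of_le_mul_secondDiff {N : ℕ} {m : ℝ} (hm : -1 < m) {d : ℕ → ℝ} (h0 : d 0 = 0)
    (hN : d N = 0) (hd : ∀ k, k + 2 ≤ N → m / N ^ 2 * d (k + 1) ^ 2 ≤ d (k + 1) * secondDiff d k) :
    ∀ k ≤ N, d k = 0 := by
  obtain _ | M := N
  · intro k hk; rwa [Nat.le_zero.1 hk]
  set E := ∑ k ∈ range (M + 1), (d (k + 1) - d k) ^ 2
  set S := ∑ k ∈ range M, d (k + 1) ^ 2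
  have hS : 0 ≤ S := sum_nonneg fun _ _ => sq_nonneg _
  have hE : 0 ≤ E := sum_nonneg fun _ _ => sq_nonneg _
  have hSE : S ≤ ((M + 1 : ℕ) : ℝ) ^ 2 * E := by
    calc S ≤ ∑ _k ∈ range M, ((M + 1 : ℕ) : ℝ) * E := by
          refine sum_le_sum fun k hk => (sq_le_mul_sum_sq_sub d h0 (k + 1)).trans ?_
          have hk : k + 1 ≤ M + 1 := by have := mem_range.1 hk; omega
          gcongr
          exact sum_le_sum_of_subset_of_nonneg (range_subset_range.2 hk) fun _ _ _ => sq_nonneg _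
      _ = M * (((M + 1 : ℕ) : ℝ) * E) := by simp
      _ ≤ ((M + 1 : ℕ) : ℝ) ^ 2 * E := by push_cast; nlinarith
  have hES : ((M + 1 : ℕ) : ℝ) ^ 2 * E ≤ -m * S := by
    have h : m / ((M + 1 : ℕ) : ℝ) ^ 2 * S ≤ -E := by
      have hE : E = _ := sum_sq_sub_eq_neg_sum_mul_secondDiff d M h0 hN
      rw [hE, neg_neg, mul_sum]
      exact sum_le_sum fun k hk => hd k (by have := mem_range.1 hk; omega)
    rw [div_mul_eq_mul_div, div_le_iff₀ (by positivity)] at h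
    linarith
  have hS0 : S = 0 := by nlinarith
  intro k hk
  rcases Nat.eq_zero_or_pos k with rfl | hk0
  · exact h0
  rcases hk.lt_or_eq with hk | rfl
  · obtain ⟨j, rfl⟩ : ∃ j, k = j + 1 := ⟨k - 1, by omega⟩
    exact pow_eq_zero_iff two_ne_zero |>.1 <|
      (sum_eq_zero_iff_of_nonneg fun _ _ => sq_nonneg _).1 hS0 j (mem_range.2 (by omega))
  · exact hN

def shoot (g : ℕ → ℝ → ℝ) (s : ℝ) : ℕ → ℝ
  | 0 => 0
  | 1 => s
  | k + 2 => 2 * shoot g s (k + 1) - shoot g s k + g k (shoot g s (k + 1))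

lemma secondDiff_shoot (g : ℕ → ℝ → ℝ) (s : ℝ) (k : ℕ) :
    secondDiff (shoot g s) k = g k (shoot g s (k + 1)) := by
  rw [secondDiff, shoot]; ring

lemma continuous_shoot {g : ℕ → ℝ → ℝ} {n : ℕ} (hg : ∀ k, k + 2 ≤ n → Continuous (g k)) :
    Continuous fun s => shoot g s n := by
  suffices h : ∀ n, (∀ k, k + 1 ≤ n → Continuous (g k)) →
      Continuous (fun s => shoot g s n) ∧ Continuous (fun s => shoot g s (n + 1)) by
    obtain _ | n := n
    · exact continuous_const
    · exact (h n fun k hk => hg k (by omega)).2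
  intro n
  induction n with
  | zero => exact fun _ => ⟨continuous_const, continuous_id⟩
  | succ n ih =>
    intro hg
    obtain ⟨h₀, h₁⟩ := ih fun k hk => hg k (by omega)
    exact ⟨h₁, ((continuous_const.mul h₁).sub h₀).add ((hg n le_rfl).comp h₁)⟩

lemma abs_sub_mul_le_of_abs_secondDiff_le {x : ℕ → ℝ} {n : ℕ} {H : ℝ} (hx0 : x 0 = 0)
    (hx : ∀ k, k + 2 ≤ n → |secondDiff x k| ≤ H) :
    ∀ k ≤ n, |x k - k * x 1| ≤ H * (k * (k - 1) / 2) := by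
  suffices h : ∀ i, i + 1 ≤ n →
      |x (i + 1) - x i - x 1| ≤ H * i ∧ |x (i + 1) - (i + 1) * x 1| ≤ H * ((i + 1) * i / 2) by
    intro k hk
    obtain _ | i := k
    · simp [hx0]
    · simpa using (h i hk).2
  intro i
  induction i with
  | zero => intro _; simp [hx0]
  | succ i ih =>
    intro hi
    obtain ⟨h₁, h₂⟩ := ih (by omega)
    have h₃ := hx i hi
    rw [secondDiff] at h₃
    push_cast
    constructor
    · calc |x (i + 1 + 1) - x (i + 1) - x 1|
            = |(x (i + 1) - x i - x 1) + (x (i + 2) - 2 * x (i + 1) + x i)| := by ring_nf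
        _ ≤ H * i + H := (abs_add_le _ _).trans (add_le_add h₁ h₃)
        _ = H * (i + 1) := by ring
    · calc |x (i + 1 + 1) - (i + 1 + 1) * x 1|
            = |(x (i + 1) - (i + 1) * x 1)
                + ((x (i + 1) - x i - x 1) + (x (i + 2) - 2 * x (i + 1) + x i))| := by ring_nf
        _ ≤ H * ((i + 1) * i / 2) + (H * i + H) :=
          (abs_add_le _ _).trans (add_le_add h₂ ((abs_add_le _ _).trans (add_le_add h₁ h₃)))
        _ = H * ((i + 1 + 1) * (i + 1) / 2) := by ring

lemma abs_sub_mul_le_of_abs_secondDiff_le_linear {x : ℕ → ℝ} {N : ℕ} {A C : ℝ} (hA : 0 ≤ A)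
    (hA2 : A ≤ 2) (hC : 0 ≤ C) (hx0 : x 0 = 0)
    (hx : ∀ k, k + 2 ≤ N → |secondDiff x k| ≤ (A * |x (k + 1)| + C) / N ^ 2) :
    (2 - A) * |x N - N * x 1| ≤ A * N * |x 1| + C := by
  obtain ⟨j, hjN, hj⟩ := exists_max_image (range (N + 1)) (fun k => |x k|) ⟨0, by simp⟩
  set K := |x j|
  have hK : ∀ k ≤ N, |x k| ≤ K := fun k hk => hj k (mem_range.2 (by omega))
  have hAKC : 0 ≤ A * K + C := by positivity
  set H := (A * K + C) / N ^ 2 with hH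
  have htaylor := abs_sub_mul_le_of_abs_secondDiff_le (H := H) hx0 fun k hk =>
    (hx k hk).trans (by rw [hH]; gcongr; exact hK _ (by omega))
  have hquad : ∀ k ≤ N, H * ((k : ℝ) * (k - 1) / 2) ≤ (A * K + C) / 2 := by
    intro k hk
    rcases Nat.eq_zero_or_pos N with rfl | hN
    · simp [Nat.le_zero.1 hk]; linarith
    have hkN : (k : ℝ) ≤ N := by exact_mod_cast hk
    rw [show (A * K + C) / 2 = H * (N ^ 2 / 2) by simp only [H]; field_simp]
    gcongr
    nlinarith [(k.cast_nonneg : (0 : ℝ) ≤ k)]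
  have hKs : K ≤ N * |x 1| + (A * K + C) / 2 := by
    have hjN : j ≤ N := Nat.lt_succ_iff.1 (mem_range.1 hjN)
    have hj1 : (j : ℝ) * |x 1| ≤ N * |x 1| := by gcongr
    calc K = |j * x 1 + (x j - j * x 1)| := by rw [add_sub_cancel]
      _ ≤ j * |x 1| + (A * K + C) / 2 := (abs_add_le _ _).trans <| add_le_add
          (by rw [abs_mul, Nat.abs_cast]) ((htaylor j hjN).trans (hquad j hjN))
      _ ≤ N * |x 1| + (A * K + C) / 2 := by linarith
  have hN : |x N - N * x 1| ≤ (A * K + C) / 2 := (htaylor N le_rfl).trans (hquad N le_rfl)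
  nlinarith

lemma exists_eq_zero_of_abs_sub_mul_le {Φ : ℝ → ℝ} (hΦ : Continuous Φ) {a b c : ℝ} (hac : a < c)
    (h : ∀ s, |Φ s - c * s| ≤ a * |s| + b) : ∃ s, Φ s = 0 := by
  set s₀ := |b| / (c - a) + 1
  have hs₀ : 0 < s₀ := by positivity
  have hbs₀ : b < (c - a) * s₀ := by
    simp only [s₀, mul_add, mul_div_cancel₀ _ (sub_pos.2 hac).ne']
    linarith [le_abs_self b, sub_pos.2 hac]
  have hpos := h s₀
  have hneg := h (-s₀)
  rw [abs_of_pos hs₀, abs_le] at hpos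
  rw [abs_neg, abs_of_pos hs₀, abs_le] at hneg
  obtain ⟨s, -, hs⟩ := intermediate_value_Icc (neg_le_self hs₀.le) hΦ.continuousOn
    (show (0 : ℝ) ∈ Set.Icc (Φ (-s₀)) (Φ s₀) from ⟨by linarith, by linarith⟩)
  exact ⟨s, hs⟩

def SolvesDirichlet (N : ℕ) (g : ℕ → ℝ → ℝ) (x : ℕ → ℝ) : Prop :=
  x 0 = 0 ∧ x N = 0 ∧ ∀ k, k + 2 ≤ N → secondDiff x k = g k (x (k + 1)) / N ^ 2

lemma SolvesDirichlet.congr {N : ℕ} {g : ℕ → ℝ → ℝ} {x y : ℕ → ℝ} (hx : SolvesDirichlet N g x)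
    (hxy : ∀ k ≤ N, x k = y k) : SolvesDirichlet N g y := by
  obtain ⟨h0, hN, heq⟩ := hx
  refine ⟨hxy 0 (Nat.zero_le _) ▸ h0, hxy N le_rfl ▸ hN, fun k hk => ?_⟩
  simp only [secondDiff, ← hxy (k + 2) hk, ← hxy (k + 1) (by omega), ← hxy k (by omega)]
  exact heq k hk

theorem exists_solvesDirichlet {N : ℕ} (hN : 0 < N) {g : ℕ → ℝ → ℝ} {A C : ℝ} (hA : 0 ≤ A)
    (hA1 : A < 1) (hC : 0 ≤ C) (hcont : ∀ k, k + 2 ≤ N → Continuous (g k))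
    (hgrowth : ∀ k, k + 2 ≤ N → ∀ y, |g k y| ≤ A * |y| + C) :
    ∃ x, SolvesDirichlet N g x := by
  set G : ℕ → ℝ → ℝ := fun k y => g k y / N ^ 2
  have hN' : (0 : ℝ) < N := by exact_mod_cast hN
  have hbound (s : ℝ) : |shoot G s N - N * s| ≤ A * N / (2 - A) * |s| + C / (2 - A) := by
    have h := abs_sub_mul_le_of_abs_secondDiff_le_linear (x := shoot G s) hA (by linarith) hC rfl
      fun k hk => by
        rw [secondDiff_shoot, abs_div, abs_of_pos (by positivity : (0 : ℝ) < N ^ 2)]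
        gcongr
        exact hgrowth k hk _
    rw [div_mul_eq_mul_div, ← add_div, le_div_iff₀ (by linarith), mul_comm]
    simpa [shoot] using h
  obtain ⟨s, hs⟩ := exists_eq_zero_of_abs_sub_mul_le
    (continuous_shoot fun k hk => (hcont k hk).div_const _) (c := N)
    (by rw [mul_div_right_comm]; exact mul_lt_of_lt_one_left hN' (by rw [div_lt_one] <;> linarith))
    hbound
  exact ⟨shoot G s, rfl, hs, fun k _ => secondDiff_shoot G s k⟩

theorem SolvesDirichlet.eq {N : ℕ} {g : ℕ → ℝ → ℝ} {m : ℝ} (hm : -1 < m)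
    (hg : ∀ k, k + 2 ≤ N → ∀ a b, m * (a - b) ^ 2 ≤ (g k a - g k b) * (a - b))
    {x y : ℕ → ℝ} (hx : SolvesDirichlet N g x) (hy : SolvesDirichlet N g y) :
    ∀ k ≤ N, x k = y k := by
  have h := eq_zero_of_le_mul_secondDiff (N := N) hm (d := x - y) (by simp [hx.1, hy.1])
    (by simp [hx.2.1, hy.2.1]) fun k hk => by
      have hxy : secondDiff (x - y) k = (g k (x (k + 1)) - g k (y (k + 1))) / N ^ 2 := by
        rw [sub_div, ← hx.2.2 k hk, ← hy.2.2 k hk]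
        simp only [secondDiff, Pi.sub_apply]; ring
      rw [hxy, Pi.sub_apply, div_mul_eq_mul_div, mul_div_assoc', mul_comm (x (k + 1) - _)]
      exact div_le_div_of_nonneg_right (hg k hk _ _) (by positivity)
  exact fun k hk => sub_eq_zero.1 (h k hk)

theorem existsUnique_int_zero_outside {N : ℕ} {P : (ℕ → ℝ) → Prop}
    (hP : ∀ x y, P x → (∀ k ≤ N, x k = y k) → P y) (hex : ∃ x, P x)
    (huniq : ∀ x y, P x → P y → ∀ k ≤ N, x k = y k) :
    ∃! X : ℤ → ℝ, (∀ k : ℤ, (k < 0 ∨ N < k) → X k = 0) ∧ P fun n => X n := by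
  obtain ⟨x, hx⟩ := hex
  have hX (k : ℕ) (hk : k ≤ N) :
      (if 0 ≤ (k : ℤ) ∧ (k : ℤ) ≤ N then x (k : ℤ).toNat else 0) = x k := by
    simp [show (k : ℤ) ≤ N by exact_mod_cast hk]
  refine ⟨fun k => if 0 ≤ k ∧ k ≤ N then x k.toNat else 0,
    ⟨fun k hk => if_neg (by omega), hP x _ hx fun k hk => (hX k hk).symm⟩, ?_⟩
  rintro Y ⟨hYout, hY⟩
  funext k
  by_cases hk : 0 ≤ k ∧ k ≤ N
  · lift k to ℕ using hk.1
    have hkN : k ≤ N := by exact_mod_cast hk.2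
    rw [hX k hkN]
    exact huniq _ _ hY hx k hkN
  · rw [hYout k (by omega), if_neg hk]

lemma forall_int_interior_iff {N : ℕ} {P : ℤ → Prop} :
    (∀ k : ℤ, 1 ≤ k → k ≤ N - 1 → P k) ↔ ∀ n : ℕ, n + 2 ≤ N → P (n + 1) := by
  refine ⟨fun h n hn => h _ (by omega) (by omega), fun h k hk1 hkN => ?_⟩
  obtain ⟨n, rfl⟩ : ∃ n : ℕ, k = n + 1 := ⟨(k - 1).toNat, by omega⟩
  exact h n (by omega)

lemma mul_sq_sub_le_of_le_deriv {φ : ℝ → ℝ} (hφ : Differentiable ℝ φ) {m : ℝ}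
    (hm : ∀ z, m ≤ deriv φ z) (a b : ℝ) : m * (a - b) ^ 2 ≤ (φ a - φ b) * (a - b) := by
  rcases le_total b a with h | h
  · have := mul_sub_le_image_sub_of_le_deriv hφ hm h
    nlinarith
  · have := mul_sub_le_image_sub_of_le_deriv hφ hm h
    nlinarith

end DiscreteDirichlet

open DiscreteDirichlet in
theorem discrete_dirichlet_problem_unique_solution_general
    (N : ℕ) (hN : 2 ≤ N) (f fx : ℝ → ℝ → ℝ) (v : ℝ → ℝ)
    (hfx_deriv : ∀ t ∈ Set.Icc (0:ℝ) 1, ∀ z : ℝ, HasDerivAt (fun w => f t w) (fx t z) z)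
    (A B : ℝ) (hA : 0 < A) (hB : 0 < B) (hAlt : A < 1)
    (hgrowth : ∀ t ∈ Set.Icc (0:ℝ) 1, ∀ z : ℝ, |f t z| ≤ A * |z| + B)
    (hfx_lb : ∃ m : ℝ, -1 < m ∧ ∀ t ∈ Set.Icc (0:ℝ) 1, ∀ z : ℝ, m ≤ fx t z) :
    ∃! x : ℤ → ℝ,
      x 0 = 0 ∧ x (N:ℤ) = 0 ∧ (∀ k : ℤ, (k < 0 ∨ (N:ℤ) < k) → x k = 0) ∧
      ∀ k : ℤ, 1 ≤ k → k ≤ (N:ℤ) - 1 →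
        x (k+1) - 2 * x k + x (k-1)
          = (1/(N:ℝ)^2) * f ((k:ℝ)/(N:ℝ)) (x k) + (1/(N:ℝ)^2) * v ((k:ℝ)/(N:ℝ)) := by
  obtain ⟨m, hm, hfx_ge⟩ := hfx_lb
  set t : ℕ → ℝ := fun n => (n + 1) / N
  have ht (n : ℕ) (hn : n + 2 ≤ N) : t n ∈ Set.Icc (0 : ℝ) 1 :=
    ⟨by positivity, div_le_one_of_le₀ (by exact_mod_cast (by omega : n + 1 ≤ N)) (by positivity)⟩
  set g : ℕ → ℝ → ℝ := fun n y => f (t n) y + v (t n)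
  have hdiff (n : ℕ) (hn : n + 2 ≤ N) : Differentiable ℝ (f (t n)) :=
    fun z => (hfx_deriv _ (ht n hn) z).differentiableAt
  refine (existsUnique_congr fun X => ?_).2 <|
    existsUnique_int_zero_outside (P := SolvesDirichlet N g) (fun x y hx hxy => hx.congr hxy) ?_
      fun x y hx hy => hx.eq hm (fun n hn => ?_) hy
  · simp only [SolvesDirichlet, forall_int_interior_iff, secondDiff, g, t]
    push_cast
    ring_nf
    tauto
  · refine exists_solvesDirichlet (by omega) hA.le hAlt
      (C := B + ∑ n ∈ range N, |v (t n)|) (by positivity)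
      (fun n hn => (hdiff n hn).continuous.add continuous_const) fun n hn y => ?_
    calc |f (t n) y + v (t n)| ≤ |f (t n) y| + |v (t n)| := abs_add_le _ _
      _ ≤ A * |y| + B + ∑ n ∈ range N, |v (t n)| := add_le_add (hgrowth _ (ht n hn) y)
          (single_le_sum (f := fun j => |v (t j)|) (fun _ _ => abs_nonneg _)
            (mem_range.2 (by omega)))
      _ = _ := by ring
  · simpa only [g, add_sub_add_right_eq_sub] using mul_sq_sub_le_of_le_deriv (hdiff n hn)
      fun z => (hfx_deriv _ (ht n hn) z).deriv ▸ hfx_ge _ (ht n hn) z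

/-- **Solvability of the discrete Dirichlet problem.**
Fix `N ≥ 2`, let `v : [0,1] → ℝ` be continuous and let `f : [0,1] × ℝ → ℝ` satisfy
C(c): `f` is continuous on `[0,1] × ℝ` with continuous partial derivative `fx` in the
second variable;
D(f): there are constants `0 < A < 1`, `0 < B` with `|f(t,x)| ≤ A|x| + B`;
D(f_x): `inf f_x > −1`.
Then the discrete problem
`Δ²x(k−1) = (1/N²) f(k/N, x(k)) + (1/N²) v(k/N)` for `k = 1,…,N−1`, `x(0) = x(N) = 0`,
has a unique solution in `𝔼_N` (functions on `{0,…,N}` vanishing at the ends, modelled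
as functions on `ℤ` extended by `0`). -/
theorem discrete_dirichlet_problem_unique_solution
    (N : ℕ) (hN : 2 ≤ N) (f fx : ℝ → ℝ → ℝ) (v : ℝ → ℝ)
    (hv : ContinuousOn v (Set.Icc (0:ℝ) 1))
    (hf_cont : ContinuousOn (fun p : ℝ × ℝ => f p.1 p.2) (Set.Icc 0 1 ×ˢ Set.univ))
    (hfx_deriv : ∀ t ∈ Set.Icc (0:ℝ) 1, ∀ z : ℝ, HasDerivAt (fun w => f t w) (fx t z) z)
    (hfx_cont : ContinuousOn (fun p : ℝ × ℝ => fx p.1 p.2) (Set.Icc 0 1 ×ˢ Set.univ))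
    (A B : ℝ) (hA : 0 < A) (hB : 0 < B) (hAlt : A < 1)
    (hgrowth : ∀ t ∈ Set.Icc (0:ℝ) 1, ∀ z : ℝ, |f t z| ≤ A * |z| + B)
    (hfx_lb : ∃ m : ℝ, -1 < m ∧ ∀ t ∈ Set.Icc (0:ℝ) 1, ∀ z : ℝ, m ≤ fx t z) :
    ∃! x : ℤ → ℝ,
      x 0 = 0 ∧ x (N:ℤ) = 0 ∧ (∀ k : ℤ, (k < 0 ∨ (N:ℤ) < k) → x k = 0) ∧
      ∀ k : ℤ, 1 ≤ k → k ≤ (N:ℤ) - 1 →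
        x (k+1) - 2 * x k + x (k-1)
          = (1/(N:ℝ)^2) * f ((k:ℝ)/(N:ℝ)) (x k) + (1/(N:ℝ)^2) * v ((k:ℝ)/(N:ℝ)) :=
  discrete_dirichlet_problem_unique_solution_general N hN f fx v hfx_deriv A B hA hB hAlt hgrowth
    hfx_lb
end

section
/- Fix N ∈ ℕ, N ≥ 2, and assume f : [0,1] × ℝ → ℝ has continuous partial derivative f_x with respect to the second variable satisfying D(f_x): inf over [0,1] × ℝ of f_x is > −1. Then for every x ∈ 𝔼_N the linear operator D_N′(x) on 𝔼_N, given by D_N′(x)h(k) = Δ²h(k−1) − (1/N²) f_x(k/N, x(k)) h(k) for k = 1,…,N−1 (and 0 at k = 0, N), is invertible; equivalently, for every a ∈ 𝔼_N there exists exactly one h ∈ 𝔼_N with D_N′(x)h = a. -/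
/-! Write `h ∈ 𝔼_N` as a sequence vanishing at `0` and `N`. Summation by parts gives
`∑ Δ²h(k-1) h(k) = -∑ (Δh)²`, and the discrete Poincaré inequality
`∑ h(k)² ≤ (N-1)² ∑ (Δh)²` (from `h(k) = ∑_{j<k} Δh(j)` and Cauchy–Schwarz) shows that the
zeroth-order term `-(1/N²) f_x h`, whose coefficient is at most `-m/N² < 1/(N-1)²` when
`f_x ≥ m > -1`, cannot balance `Δ²h` unless `h = 0`. So `D_N′(x)` is injective, hence
invertible on the finite-dimensional space `𝔼_N`. -/

/-- The space `𝔼_N` of functions `x : {0,…,N} → ℝ` with `x(0) = x(N) = 0` is identified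
with `ℝ^{N−1}` via the interior values `x(1),…,x(N−1)`; `ext N x k` recovers `x(k)` for
`k ∈ ℤ` (extending by `0` at the boundary and outside `{0,…,N}`).  With this
identification the Euclidean norm of `ℝ^{N−1}` is exactly `‖x‖_N`. -/
noncomputable def ext (N : ℕ) (x : EuclideanSpace ℝ (Fin (N-1))) (k : ℤ) : ℝ :=
  if h : 1 ≤ k ∧ k ≤ (N:ℤ) - 1 then x ⟨(k-1).toNat, by omega⟩ else 0

/-- The operator `D_N : 𝔼_N → 𝔼_N`,
`(D_N x)(k) = Δ²x(k−1) − (1/N²) f(k/N, x(k))` for `k = 1,…,N−1`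
(and `0` at `k = 0, N`), written on interior indices `k = i + 1`, `i : Fin (N−1)`. -/
noncomputable def DN (N : ℕ) (f : ℝ → ℝ → ℝ) (x : EuclideanSpace ℝ (Fin (N-1))) :
    EuclideanSpace ℝ (Fin (N-1)) :=
  WithLp.toLp 2 fun (i : Fin (N-1)) => ext N x ((i:ℕ)+2) - 2 * ext N x ((i:ℕ)+1) + ext N x (i:ℕ)
    - (1/(N:ℝ)^2) * f ((((i:ℕ):ℝ)+1)/(N:ℝ)) (ext N x ((i:ℕ)+1))

section DiscreteDirichlet

open Finset

variable {H : ℕ → ℝ} {n : ℕ}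

theorem sum_secondDiff_mul_eq_neg_sum_sq_diff (h0 : H 0 = 0) (hn : H (n + 1) = 0) :
    ∑ j ∈ range n, (H (j + 2) - 2 * H (j + 1) + H j) * H (j + 1) =
      -∑ k ∈ range (n + 1), (H (k + 1) - H k) ^ 2 := by
  have hterm : ∀ j, (H (j + 2) - 2 * H (j + 1) + H j) * H (j + 1) =
      ((H (j + 1 + 1) - H (j + 1)) * H (j + 1) - (H (j + 1) - H j) * H j)
        - (H (j + 1) - H j) ^ 2 := fun j => by ring
  rw [sum_congr rfl fun j _ => hterm j, sum_sub_distrib,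
    sum_range_sub (fun k => (H (k + 1) - H k) * H k), sum_range_succ, hn, h0]
  ring

theorem sq_le_mul_sum_sq_diff (h0 : H 0 = 0) {j : ℕ} (hj : j < n) :
    H (j + 1) ^ 2 ≤ n * ∑ k ∈ range n, (H (k + 1) - H k) ^ 2 := by
  have htel : H (j + 1) = ∑ k ∈ range (j + 1), (H (k + 1) - H k) := by
    rw [sum_range_sub, h0, sub_zero]
  calc H (j + 1) ^ 2 ≤ (j + 1 : ℕ) * ∑ k ∈ range (j + 1), (H (k + 1) - H k) ^ 2 := by
        simpa only [htel, card_range] using sq_sum_le_card_mul_sum_sq (s := range (j + 1))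
    _ ≤ n * ∑ k ∈ range n, (H (k + 1) - H k) ^ 2 := by
        gcongr <;> exact hj

theorem sum_sq_le_sq_mul_sum_sq_diff (h0 : H 0 = 0) :
    ∑ j ∈ range n, H (j + 1) ^ 2 ≤ n ^ 2 * ∑ k ∈ range n, (H (k + 1) - H k) ^ 2 := by
  calc ∑ j ∈ range n, H (j + 1) ^ 2
      ≤ ∑ _j ∈ range n, n * ∑ k ∈ range n, (H (k + 1) - H k) ^ 2 :=
        sum_le_sum fun j hj => sq_le_mul_sum_sq_diff h0 (mem_range.mp hj)
    _ = n ^ 2 * ∑ k ∈ range n, (H (k + 1) - H k) ^ 2 := by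
        rw [sum_const, card_range, nsmul_eq_mul]; ring

theorem eq_zero_of_secondDiff_eq_mul {c : ℕ → ℝ} {κ : ℝ} (h0 : H 0 = 0) (hn : H (n + 1) = 0)
    (hc : ∀ j < n, -κ ≤ c j) (hκ : κ * n ^ 2 < 1)
    (heq : ∀ j < n, H (j + 2) - 2 * H (j + 1) + H j = c j * H (j + 1)) :
    ∀ j < n, H (j + 1) = 0 := by
  set S := ∑ j ∈ range n, H (j + 1) ^ 2
  set D := ∑ k ∈ range (n + 1), (H (k + 1) - H k) ^ 2
  have hS_nonneg : 0 ≤ S := sum_nonneg fun _ _ => sq_nonneg _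
  have hD_le : D ≤ κ * S := by
    rw [← neg_neg D, ← sum_secondDiff_mul_eq_neg_sum_sq_diff h0 hn, mul_sum, ← sum_neg_distrib]
    refine sum_le_sum fun j hj => ?_
    rw [heq j (mem_range.mp hj)]
    nlinarith [hc j (mem_range.mp hj), sq_nonneg (H (j + 1))]
  have hS_le : S ≤ n ^ 2 * D := by
    refine (sum_sq_le_sq_mul_sum_sq_diff h0).trans ?_
    gcongr
    rw [show D = _ from sum_range_succ _ n]
    exact le_add_of_nonneg_right (sq_nonneg _)
  have hS : S = 0 := by nlinarith [mul_le_mul_of_nonneg_left hD_le (sq_nonneg (n : ℝ))]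
  intro j hj
  exact pow_eq_zero_iff two_ne_zero |>.mp <|
    (sum_eq_zero_iff_of_nonneg fun _ _ => sq_nonneg _).mp hS j (mem_range.mpr hj)

end DiscreteDirichlet

section Linearization

variable {N : ℕ}

theorem ext_add (x y : EuclideanSpace ℝ (Fin (N - 1))) (k : ℤ) :
    ext N (x + y) k = ext N x k + ext N y k := by
  unfold ext; split <;> simp

theorem ext_smul (r : ℝ) (x : EuclideanSpace ℝ (Fin (N - 1))) (k : ℤ) :
    ext N (r • x) k = r * ext N x k := by
  unfold ext; split <;> simp

theorem ext_index_zero (x : EuclideanSpace ℝ (Fin (N - 1))) : ext N x 0 = 0 :=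
  dif_neg (by omega)

theorem ext_index_self (x : EuclideanSpace ℝ (Fin (N - 1))) : ext N x N = 0 :=
  dif_neg (by omega)

theorem ext_index_succ (x : EuclideanSpace ℝ (Fin (N - 1))) (i : Fin (N - 1)) :
    ext N x ((i : ℕ) + 1) = x i := by
  rw [ext, dif_pos (by omega)]
  exact congrArg x (Fin.ext (by simp))

variable (N) in
/-- The linearization `D_N′(x)` of `DN N f` at `x`, where `fx` is the partial derivative of `f`
in its second variable. -/
noncomputable def derivDN (fx : ℝ → ℝ → ℝ) (x : EuclideanSpace ℝ (Fin (N - 1))) :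
    EuclideanSpace ℝ (Fin (N - 1)) →ₗ[ℝ] EuclideanSpace ℝ (Fin (N - 1)) where
  toFun h := WithLp.toLp 2 fun i => ext N h ((i : ℕ) + 2) - 2 * ext N h ((i : ℕ) + 1)
    + ext N h (i : ℕ) - (1 / (N : ℝ) ^ 2) * fx (((i : ℕ) + 1) / N) (ext N x ((i : ℕ) + 1))
      * ext N h ((i : ℕ) + 1)
  map_add' u v := by
    ext i
    simp only [ext_add, PiLp.add_apply]
    ring
  map_smul' r u := by
    ext i
    simp only [ext_smul, PiLp.smul_apply, smul_eq_mul, RingHom.id_apply]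
    ring

theorem derivDN_apply (fx : ℝ → ℝ → ℝ) (x h : EuclideanSpace ℝ (Fin (N - 1))) (i : Fin (N - 1)) :
    derivDN N fx x h i = ext N h ((i : ℕ) + 2) - 2 * ext N h ((i : ℕ) + 1) + ext N h (i : ℕ)
      - (1 / (N : ℝ) ^ 2) * fx (((i : ℕ) + 1) / N) (ext N x ((i : ℕ) + 1))
        * ext N h ((i : ℕ) + 1) :=
  rfl

theorem derivDN_injective (hN : 1 ≤ N) (fx : ℝ → ℝ → ℝ) (x : EuclideanSpace ℝ (Fin (N - 1)))
    {m : ℝ} (hm : -1 < m)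
    (hfx : ∀ i : Fin (N - 1), m ≤ fx (((i : ℕ) + 1) / N) (ext N x ((i : ℕ) + 1))) :
    Function.Injective (derivDN N fx x) := by
  rw [← LinearMap.ker_eq_bot, LinearMap.ker_eq_bot']
  intro h hh
  have hN1 : N - 1 + 1 = N := by omega
  have hNpos : (0 : ℝ) < N := by exact_mod_cast hN
  have hzero := eq_zero_of_secondDiff_eq_mul (H := fun k : ℕ => ext N h k) (n := N - 1)
    (c := fun j => 1 / (N : ℝ) ^ 2 * fx ((j + 1) / N) (ext N x ((j : ℕ) + 1)))
    (κ := -m / N ^ 2) (ext_index_zero h) (by rw [hN1]; exact ext_index_self h)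
    (fun j hj => by
      rw [neg_div, neg_neg, one_div_mul_eq_div]
      gcongr
      exact hfx ⟨j, hj⟩)
    (by
      rw [Nat.cast_sub hN, div_mul_eq_mul_div, div_lt_one (by positivity)]
      have : (1 : ℝ) ≤ N := by exact_mod_cast hN
      push_cast
      nlinarith [mul_nonneg (by linarith : 0 ≤ 1 + m) (sq_nonneg ((N : ℝ) - 1))])
    (fun j hj => by
      have := congrArg (· ⟨j, hj⟩) hh
      simp only [derivDN_apply, PiLp.zero_apply] at this
      push_cast
      linarith)
  ext i
  simpa [ext_index_succ] using hzero i i.isLt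

end Linearization

theorem DN_derivative_invertible_general
    (N : ℕ) (hN : 2 ≤ N) (fx : ℝ → ℝ → ℝ)
    (hfx_lb : ∃ m : ℝ, -1 < m ∧ ∀ t ∈ Set.Icc (0:ℝ) 1, ∀ z : ℝ, m ≤ fx t z) :
    ∀ x a : EuclideanSpace ℝ (Fin (N-1)),
      ∃! h : EuclideanSpace ℝ (Fin (N-1)),
        ∀ i : Fin (N-1),
          ext N h ((i:ℕ)+2) - 2 * ext N h ((i:ℕ)+1) + ext N h (i:ℕ)
            - (1/(N:ℝ)^2) * fx ((((i:ℕ):ℝ)+1)/(N:ℝ)) (ext N x ((i:ℕ)+1))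
              * ext N h ((i:ℕ)+1) = a i := by
  obtain ⟨m, hm, hfx_m⟩ := hfx_lb
  intro x a
  have hgrid (i : Fin (N - 1)) : ((i : ℕ) + 1 : ℝ) / N ∈ Set.Icc (0 : ℝ) 1 := by
    refine ⟨by positivity, div_le_one_of_le₀ ?_ (Nat.cast_nonneg N)⟩
    exact_mod_cast (by omega : (i : ℕ) + 1 ≤ N)
  have hinj : Function.Injective (derivDN N fx x) :=
    derivDN_injective (by omega) fx x hm fun i => hfx_m _ (hgrid i) _
  have hbij : Function.Bijective (derivDN N fx x) :=
    ⟨hinj, LinearMap.injective_iff_surjective.mp hinj⟩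
  simpa only [PiLp.ext_iff, derivDN_apply] using hbij.existsUnique a

/-- Under D(f_x) (`f_x` continuous with `inf f_x > −1`), for every `x ∈ 𝔼_N` the linear
operator `D_N′(x)`, `h ↦ (Δ²h(k−1) − (1/N²) f_x(k/N, x(k)) h(k))_{k=1,…,N−1}`, is
invertible: for every `a ∈ 𝔼_N` there exists exactly one `h ∈ 𝔼_N` with
`D_N′(x) h = a`. -/
theorem DN_derivative_invertible
    (N : ℕ) (hN : 2 ≤ N) (f fx : ℝ → ℝ → ℝ)
    (hfx_deriv : ∀ t ∈ Set.Icc (0:ℝ) 1, ∀ z : ℝ, HasDerivAt (fun w => f t w) (fx t z) z)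
    (hfx_cont : ContinuousOn (fun p : ℝ × ℝ => fx p.1 p.2) (Set.Icc 0 1 ×ˢ Set.univ))
    (hfx_lb : ∃ m : ℝ, -1 < m ∧ ∀ t ∈ Set.Icc (0:ℝ) 1, ∀ z : ℝ, m ≤ fx t z) :
    ∀ x a : EuclideanSpace ℝ (Fin (N-1)),
      ∃! h : EuclideanSpace ℝ (Fin (N-1)),
        ∀ i : Fin (N-1),
          ext N h ((i:ℕ)+2) - 2 * ext N h ((i:ℕ)+1) + ext N h (i:ℕ)
            - (1/(N:ℝ)^2) * fx ((((i:ℕ):ℝ)+1)/(N:ℝ)) (ext N x ((i:ℕ)+1))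
              * ext N h ((i:ℕ)+1) = a i :=
  DN_derivative_invertible_general N hN fx hfx_lb
end

section
/- Let v : [0,1] → ℝ be continuous and assume f : [0,1] × ℝ → ℝ satisfies: C(c): f is continuous on [0,1] × ℝ with continuous partial derivative f_x with respect to the second variable; D(f): there exist positive constants A, B with A < 1 such that |f(t,x)| ≤ A|x| + B for all t ∈ [0,1], x ∈ ℝ; D(f_x): inf over [0,1] × ℝ of f_x is > −1. For each N ≥ 2 let x_N ∈ 𝔼_N denote the unique solution of the discrete problem Δ²x_N(k−1) = (1/N²) f(k/N, x_N(k)) + (1/N²) v(k/N), k = 1,…,N−1, x_N(0) = x_N(N) = 0. Then there exists a constant M := (‖v‖_∞ + B)/(1 − A) such that |x_N(k)| ≤ M for every N ≥ 2 and every k ∈ {0,1,…,N}. -/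
lemma discrete_min_principle (N : ℤ) (w : ℤ → ℝ) (h0 : 0 ≤ w 0) (hNN : 0 ≤ w N)
    (hconc : ∀ k : ℤ, 1 ≤ k → k ≤ N - 1 → w (k+1) - 2 * w k + w (k-1) ≤ 0) :
    ∀ k : ℤ, 0 ≤ k → k ≤ N → 0 ≤ w k := by
  intro k hk hkN
  have hN : (0:ℤ) ≤ N := le_trans hk hkN
  have hne : (Finset.Icc (0:ℤ) N).Nonempty := ⟨0, by simp [hN]⟩
  set m := (Finset.Icc (0:ℤ) N).inf' hne w with hm
  suffices h : 0 ≤ m by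
    exact le_trans h (Finset.inf'_le _ (Finset.mem_Icc.mpr ⟨hk, hkN⟩))
  by_contra hneg
  push_neg at hneg
  have hT : ((Finset.Icc (0:ℤ) N).filter (fun j => w j ≤ m)).Nonempty := by
    obtain ⟨j, hj, hje⟩ := Finset.exists_mem_eq_inf' hne w
    exact ⟨j, Finset.mem_filter.mpr ⟨hj, le_of_eq hje.symm⟩⟩
  set T := (Finset.Icc (0:ℤ) N).filter (fun j => w j ≤ m) with hTdef
  set k₀ := T.max' hT with hk0
  have hk₀T : k₀ ∈ T := T.max'_mem hT
  have hk₀S : k₀ ∈ Finset.Icc (0:ℤ) N := (Finset.mem_filter.mp hk₀T).1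
  have hwk₀ : w k₀ = m := le_antisymm (Finset.mem_filter.mp hk₀T).2 (Finset.inf'_le _ hk₀S)
  obtain ⟨hk₀0, hk₀N⟩ := Finset.mem_Icc.mp hk₀S
  have hne0 : k₀ ≠ 0 := by
    intro h; rw [h] at hwk₀; linarith
  have hneN : k₀ ≠ N := by
    intro h; rw [h] at hwk₀; linarith
  have h1 : 1 ≤ k₀ := by omega
  have h2 : k₀ ≤ N - 1 := by omega
  have hleft : m ≤ w (k₀ - 1) := Finset.inf'_le _ (Finset.mem_Icc.mpr ⟨by omega, by omega⟩)
  have hright : m < w (k₀ + 1) := by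
    by_contra hcon
    push_neg at hcon
    have : k₀ + 1 ∈ T := Finset.mem_filter.mpr ⟨Finset.mem_Icc.mpr ⟨by omega, by omega⟩, hcon⟩
    have := Finset.le_max' T _ this
    omega
  have := hconc k₀ h1 h2
  rw [hwk₀] at this
  linarith


/-- **Uniform boundedness of the discrete solutions.**
Let `v : [0,1] → ℝ` be continuous and let `f` satisfy C(c), D(f) (`0 < A < 1`, `0 < B`,
`|f(t,x)| ≤ A|x| + B`) and D(f_x) (`inf f_x > −1`).  Then, with
`M := (‖v‖_∞ + B)/(1 − A)`, for every `N ≥ 2` the solution `x_N ∈ 𝔼_N` of the discrete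
problem `Δ²x(k−1) = (1/N²) f(k/N, x(k)) + (1/N²) v(k/N)`, `x(0) = x(N) = 0`, satisfies
`|x_N(k)| ≤ M` for every `k ∈ {0,…,N}`. -/
theorem discrete_solutions_uniformly_bounded
    (f fx : ℝ → ℝ → ℝ) (v : ℝ → ℝ)
    (hv : ContinuousOn v (Set.Icc (0:ℝ) 1))
    (hf_cont : ContinuousOn (fun p : ℝ × ℝ => f p.1 p.2) (Set.Icc 0 1 ×ˢ Set.univ))
    (hfx_deriv : ∀ t ∈ Set.Icc (0:ℝ) 1, ∀ z : ℝ, HasDerivAt (fun w => f t w) (fx t z) z)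
    (hfx_cont : ContinuousOn (fun p : ℝ × ℝ => fx p.1 p.2) (Set.Icc 0 1 ×ˢ Set.univ))
    (A B : ℝ) (hA : 0 < A) (hB : 0 < B) (hAlt : A < 1)
    (hgrowth : ∀ t ∈ Set.Icc (0:ℝ) 1, ∀ z : ℝ, |f t z| ≤ A * |z| + B)
    (hfx_lb : ∃ m : ℝ, -1 < m ∧ ∀ t ∈ Set.Icc (0:ℝ) 1, ∀ z : ℝ, m ≤ fx t z) :
    ∀ N : ℕ, 2 ≤ N → ∀ x : ℤ → ℝ,
      x 0 = 0 → x (N:ℤ) = 0 → (∀ k : ℤ, (k < 0 ∨ (N:ℤ) < k) → x k = 0) →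
      (∀ k : ℤ, 1 ≤ k → k ≤ (N:ℤ) - 1 →
        x (k+1) - 2 * x k + x (k-1)
          = (1/(N:ℝ)^2) * f ((k:ℝ)/(N:ℝ)) (x k) + (1/(N:ℝ)^2) * v ((k:ℝ)/(N:ℝ))) →
      ∀ k : ℤ, 0 ≤ k → k ≤ (N:ℤ) →
        |x k| ≤ (sSup ((fun t => |v t|) '' Set.Icc (0:ℝ) 1) + B) / (1 - A) := by
  intro N hN x hx0 hxN hxout hEq k hk hkN
  have hNR : (0:ℝ) < (N:ℝ) := by exact_mod_cast Nat.lt_of_lt_of_le (by norm_num) hN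
  have hNR2 : (0:ℝ) < (N:ℝ)^2 := by positivity
  set V := sSup ((fun t => |v t|) '' Set.Icc (0:ℝ) 1) with hVdef
  have hbdd : BddAbove ((fun t => |v t|) '' Set.Icc (0:ℝ) 1) :=
    (isCompact_Icc.image_of_continuousOn hv.abs).bddAbove
  have hVle : ∀ t ∈ Set.Icc (0:ℝ) 1, |v t| ≤ V := fun t ht => le_csSup hbdd ⟨t, ht, rfl⟩
  have hV0 : 0 ≤ V := le_trans (abs_nonneg _) (hVle 0 (by norm_num))
  have hNZ : (0:ℤ) ≤ (N:ℤ) := by positivity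
  have hne : (Finset.Icc (0:ℤ) (N:ℤ)).Nonempty := ⟨0, by simp [hNZ]⟩
  set M₀ := (Finset.Icc (0:ℤ) (N:ℤ)).sup' hne (fun j => |x j|) with hM₀def
  have hM₀le : ∀ j : ℤ, 0 ≤ j → j ≤ (N:ℤ) → |x j| ≤ M₀ := fun j h1 h2 =>
    Finset.le_sup' (fun j => |x j|) (Finset.mem_Icc.mpr ⟨h1, h2⟩)
  have hM₀0 : 0 ≤ M₀ := le_trans (abs_nonneg _) (hM₀le 0 le_rfl hNZ)
  set c := A * M₀ + B + V with hcdef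
  have hc0 : 0 ≤ c := by nlinarith
  -- interior bound on the second difference
  have hbound : ∀ j : ℤ, 1 ≤ j → j ≤ (N:ℤ) - 1 →
      |x (j+1) - 2 * x j + x (j-1)| ≤ c / (N:ℝ)^2 := by
    intro j h1 h2
    rw [hEq j h1 h2]
    have htmem : (j:ℝ)/(N:ℝ) ∈ Set.Icc (0:ℝ) 1 := by
      constructor
      · apply div_nonneg _ hNR.le
        exact_mod_cast le_trans (by norm_num) h1
      · rw [div_le_one hNR]
        exact_mod_cast (by omega : j ≤ (N:ℤ))
    have hg := hgrowth _ htmem (x j)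
    have hvv := hVle _ htmem
    have hxj := hM₀le j (by omega) (by omega)
    have habs : |(1/(N:ℝ)^2) * f ((j:ℝ)/(N:ℝ)) (x j) + (1/(N:ℝ)^2) * v ((j:ℝ)/(N:ℝ))|
        ≤ (1/(N:ℝ)^2) * |f ((j:ℝ)/(N:ℝ)) (x j)| + (1/(N:ℝ)^2) * |v ((j:ℝ)/(N:ℝ))| := by
      calc _ ≤ |(1/(N:ℝ)^2) * f ((j:ℝ)/(N:ℝ)) (x j)| + |(1/(N:ℝ)^2) * v ((j:ℝ)/(N:ℝ))| :=
            abs_add_le _ _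
        _ = _ := by rw [abs_mul, abs_mul, abs_of_nonneg (by positivity : (0:ℝ) ≤ 1/(N:ℝ)^2)]
    have hAf : |f ((j:ℝ)/(N:ℝ)) (x j)| ≤ A * M₀ + B := by nlinarith
    have heq : c / (N:ℝ)^2 = (1/(N:ℝ)^2) * (A * M₀ + B) + (1/(N:ℝ)^2) * V := by
      rw [hcdef]; field_simp
    have h1' : (0:ℝ) ≤ 1/(N:ℝ)^2 := by positivity
    rw [heq]
    nlinarith
  -- quadratic barrier
  set q : ℤ → ℝ := fun j => c * ((j:ℝ) * ((N:ℝ) - (j:ℝ))) / (2 * (N:ℝ)^2) with hqdef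
  have hq0 : q 0 = 0 := by simp [hqdef]
  have hqN : q (N:ℤ) = 0 := by simp [hqdef]
  have hqdd : ∀ j : ℤ, q (j+1) - 2 * q j + q (j-1) = -(c / (N:ℝ)^2) := by
    intro j
    simp only [hqdef]
    push_cast
    field_simp
    ring
  have hqle : ∀ j : ℤ, 0 ≤ j → j ≤ (N:ℤ) → q j ≤ c / 8 := by
    intro j h1 h2
    have hj : (0:ℝ) ≤ (j:ℝ) := by exact_mod_cast h1
    have hj2 : (j:ℝ) ≤ (N:ℝ) := by exact_mod_cast h2
    rw [hqdef]
    rw [div_le_div_iff₀ (by positivity) (by norm_num : (0:ℝ) < 8)]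
    nlinarith [sq_nonneg ((N:ℝ) - 2*(j:ℝ)), mul_nonneg hc0 (sq_nonneg ((N:ℝ) - 2*(j:ℝ)))]
  have hxk8 : ∀ j : ℤ, 0 ≤ j → j ≤ (N:ℤ) → |x j| ≤ c / 8 := by
    intro j h1 h2
    have hup : 0 ≤ x j + q j := by
      apply discrete_min_principle (N:ℤ) (fun j => x j + q j) (by simp [hx0, hq0])
        (by simp [hxN, hqN]) _ j h1 h2
      intro i hi1 hi2
      have hb := hbound i hi1 hi2
      have hdd := hqdd i
      have : x (i+1) - 2 * x i + x (i-1) ≤ c / (N:ℝ)^2 := (abs_le.mp hb).2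
      linarith
    have hdown : 0 ≤ q j - x j := by
      apply discrete_min_principle (N:ℤ) (fun j => q j - x j) (by simp [hx0, hq0])
        (by simp [hxN, hqN]) _ j h1 h2
      intro i hi1 hi2
      have hb := hbound i hi1 hi2
      have hdd := hqdd i
      have : -(c / (N:ℝ)^2) ≤ x (i+1) - 2 * x i + x (i-1) := (abs_le.mp hb).1
      linarith
    have := hqle j h1 h2
    rw [abs_le]
    constructor <;> linarith
  have hM₀8 : M₀ ≤ c / 8 := by
    apply Finset.sup'_le
    intro j hj
    obtain ⟨h1, h2⟩ := Finset.mem_Icc.mp hj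
    exact hxk8 j h1 h2
  -- conclude
  have h1A : (0:ℝ) < 1 - A := by linarith
  rw [le_div_iff₀ h1A]
  have hxkM : |x k| ≤ M₀ := hM₀le k hk hkN
  nlinarith
end

section
/- Let v : [0,1] → ℝ be continuous and assume f : [0,1] × ℝ → ℝ satisfies: C(c): f is continuous on [0,1] × ℝ with continuous partial derivative f_x with respect to the second variable; D(f): there exist positive constants A, B with A < 1 such that |f(t,x)| ≤ A|x| + B for all t ∈ [0,1], x ∈ ℝ; D(f_x): inf over [0,1] × ℝ of f_x is > −1. Let x* ∈ 𝕏 be the unique solution of the continuous Dirichlet problem ẍ(t) = f(t,x(t)) + v(t), x(0) = x(1) = 0, and for each N ≥ 2 let x_N be the unique solution of the discrete problem Δ²x_N(k−1) = (1/N²) f(k/N, x_N(k)) + (1/N²) v(k/N), k = 1,…,N−1, x_N(0) = x_N(N) = 0. Then lim_{N→∞} max_{0 ≤ k ≤ N} |x*(k/N) − x_N(k)| = 0, i.e. the discrete solutions are non-spurious. -/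
open MeasureTheory Set Filter

/-!
Write `e(k) = x⋆(k/N) − x_N(k)` and `t = (j+1)/N`. Subtracting the scheme from the second difference
of `x⋆` gives `N² Δ²e(j) = (f(t, x⋆(t)) − f(t, x_N(j+1))) + r_j`, where the consistency error
`r_j = N² Δ²x⋆(j) − ẍ⋆(t)` is bounded by the modulus of continuity of `ẍ⋆ = f(·, x⋆) + v`
at scale `1/N`, so it tends to `0` uniformly in `j`. Since `f_x ≥ m := min (inf f_x) 0 > −1`, the
nonlinearity satisfies `(f(t,y) − f(t,z))(y − z) ≥ m (y − z)²`; multiplying the error equation by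
`e(j+1)`, summing by parts and using the discrete Poincaré inequality `max |e|² ≤ N ∑ (Δe)²` gives
`(1 + m) max |e| ≤ max |r|`.
-/

section DiscreteEnergy

open Finset

theorem sum_range_second_diff_mul (e : ℕ → ℝ) (n : ℕ) :
    ∑ j ∈ range n, (e (j + 2) - 2 * e (j + 1) + e j) * e (j + 1)
      = (e (n + 1) - e n) * e n - (e 1 - e 0) * e 0 - ∑ j ∈ range n, (e (j + 1) - e j) ^ 2 := by
  induction n with
  | zero => simp
  | succ n ih => rw [sum_range_succ, sum_range_succ (fun j => (e (j + 1) - e j) ^ 2), ih]; ring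

theorem sum_range_second_diff_mul_of_eq_zero (e : ℕ → ℝ) {N : ℕ} (he0 : e 0 = 0)
    (heN : e N = 0) :
    ∑ j ∈ range (N - 1), (e (j + 2) - 2 * e (j + 1) + e j) * e (j + 1)
      = -∑ j ∈ range N, (e (j + 1) - e j) ^ 2 := by
  cases N with
  | zero => simp
  | succ n =>
    rw [Nat.add_sub_cancel, sum_range_second_diff_mul, sum_range_succ, he0, heN]
    ring

theorem sq_le_mul_sum_sq_sub (e : ℕ → ℝ) (he0 : e 0 = 0) {k N : ℕ} (hk : k ≤ N) :
    e k ^ 2 ≤ N * ∑ j ∈ range N, (e (j + 1) - e j) ^ 2 := by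
  have htel : e k = ∑ j ∈ range k, (e (j + 1) - e j) := by rw [sum_range_sub, he0, sub_zero]
  calc e k ^ 2 ≤ k * ∑ j ∈ range k, (e (j + 1) - e j) ^ 2 := by
        simpa [htel] using sq_sum_le_card_mul_sum_sq (s := range k) (f := fun j => e (j + 1) - e j)
    _ ≤ N * ∑ j ∈ range N, (e (j + 1) - e j) ^ 2 := by
        gcongr

theorem mul_abs_le_of_le_second_diff_mul {N : ℕ} {e : ℕ → ℝ} {m T : ℝ} (hm : -1 < m)
    (hm0 : m ≤ 0) (hT : 0 ≤ T) (he0 : e 0 = 0) (heN : e N = 0)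
    (h : ∀ j, j + 2 ≤ N → m * e (j + 1) ^ 2 - T * |e (j + 1)|
      ≤ N ^ 2 * (e (j + 2) - 2 * e (j + 1) + e j) * e (j + 1)) :
    ∀ k ≤ N, (1 + m) * |e k| ≤ T := by
  obtain ⟨k₀, hk₀, hmax⟩ :=
    exists_max_image (range (N + 1)) (fun k => |e k|) nonempty_range_add_one
  have hk₀N : k₀ ≤ N := Nat.lt_succ_iff.mp (mem_range.mp hk₀)
  set M := |e k₀|
  have hM : ∀ k ≤ N, |e k| ≤ M := fun k hk => hmax k (mem_range.mpr (Nat.lt_succ_of_le hk))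
  suffices hMT : (1 + m) * M ≤ T from
    fun k hk => (mul_le_mul_of_nonneg_left (hM k hk) (by linarith)).trans hMT
  set S := ∑ j ∈ range N, (e (j + 1) - e j) ^ 2
  have hterm : ∀ j ∈ range (N - 1),
      -(N ^ 2 * (e (j + 2) - 2 * e (j + 1) + e j) * e (j + 1)) ≤ -m * M ^ 2 + T * M := by
    intro j hj
    replace hj : j + 2 ≤ N := by have := mem_range.mp hj; omega
    have hsq : e (j + 1) ^ 2 ≤ M ^ 2 := by
      rw [← sq_abs]; exact pow_le_pow_left₀ (abs_nonneg _) (hM (j + 1) (by omega)) 2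
    nlinarith [h j hj, hM (j + 1) (by omega)]
  have henergy : (N : ℝ) ^ 2 * S ≤ N * (-m * M ^ 2 + T * M) := calc
    (N : ℝ) ^ 2 * S = ∑ j ∈ range (N - 1),
        -(N ^ 2 * (e (j + 2) - 2 * e (j + 1) + e j) * e (j + 1)) := by
      simp only [S, mul_assoc, ← mul_sum, sum_neg_distrib,
        sum_range_second_diff_mul_of_eq_zero e he0 heN]
      ring
    _ ≤ (N - 1 : ℕ) * (-m * M ^ 2 + T * M) := (sum_le_sum hterm).trans_eq (by simp; ring)
    _ ≤ N * (-m * M ^ 2 + T * M) := by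
      gcongr
      · exact add_nonneg (mul_nonneg (neg_nonneg.mpr hm0) (sq_nonneg M))
          (mul_nonneg hT (abs_nonneg _))
      · exact Nat.sub_le N 1
  have hpoincare : M ^ 2 ≤ N * S := by simpa [M] using sq_le_mul_sum_sq_sub e he0 hk₀N
  rcases Nat.eq_zero_or_pos N with hN | hN
  · simp [M, show k₀ = 0 by omega, he0, hT]
  have hNpos : (0 : ℝ) < N := Nat.cast_pos.mpr hN
  have hM2 : (1 + m) * M * M ≤ T * M := by nlinarith
  rcases (abs_nonneg (e k₀)).eq_or_lt with hM0 | hM0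
  · simp [M, ← hM0, hT]
  · exact le_of_mul_le_mul_right hM2 hM0

end DiscreteEnergy

theorem sub_eq_integral_of_eq_primitive {x dx : ℝ → ℝ} {a b : ℝ}
    (hrep : ∀ t ∈ Icc a b, x t = x a + ∫ s in a..t, dx s)
    (hint : IntervalIntegrable dx volume a b) {p q : ℝ} (hp : p ∈ Icc a b) (hq : q ∈ Icc a b) :
    x q - x p = ∫ s in p..q, dx s := by
  have hint' : ∀ t ∈ Icc a b, IntervalIntegrable dx volume a t := fun t ht =>
    hint.mono_set (uIcc_subset_uIcc_left (Icc_subset_uIcc ht))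
  rw [hrep q hq, hrep p hp, add_sub_add_left_eq_sub,
    intervalIntegral.integral_interval_sub_left (hint' q hq) (hint' p hp)]

theorem continuousOn_of_eq_primitive {x dx : ℝ → ℝ} {a b : ℝ}
    (hrep : ∀ t ∈ Icc a b, x t = x a + ∫ s in a..t, dx s)
    (hint : IntervalIntegrable dx volume a b) : ContinuousOn x (Icc a b) :=
  (continuousOn_const.add
    ((intervalIntegral.continuousOn_primitive_interval' hint left_mem_uIcc).mono
      Icc_subset_uIcc)).congr hrep

theorem H2fun.continuousOn_x_s18 (u : H2fun) : ContinuousOn u.x (Icc 0 1) :=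
  continuousOn_of_eq_primitive u.x_rep u.dx_int

theorem H2fun.dx_eq_add_integral_of_ae_eq (u : H2fun) {g : ℝ → ℝ}
    (hg : ∀ᵐ t ∂(volume.restrict (Ioc (0 : ℝ) 1)), u.ddx t = g t) :
    ∀ t ∈ Icc (0 : ℝ) 1, u.dx t = u.dx 0 + ∫ s in 0..t, g s := by
  intro t ht
  rw [u.dx_rep t ht, intervalIntegral.integral_congr_ae_restrict
    (ae_restrict_of_ae_restrict_of_subset (uIoc_of_le ht.1 ▸ Ioc_subset_Ioc_right ht.2) hg)]

theorem abs_intervalIntegral_sub_mul_le {F : ℝ → ℝ} {p q c ε : ℝ} (hpq : p ≤ q)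
    (hF : IntervalIntegrable F volume p q) (hbound : ∀ u ∈ Ioc p q, |F u - c| ≤ ε) :
    |(∫ u in p..q, F u) - (q - p) * c| ≤ (q - p) * ε := by
  have hsub : (∫ u in p..q, F u) - (q - p) * c = ∫ u in p..q, (F u - c) := by
    rw [intervalIntegral.integral_sub hF intervalIntegrable_const, intervalIntegral.integral_const,
      smul_eq_mul]
  have := intervalIntegral.norm_integral_le_of_norm_le_const (f := fun u => F u - c) fun u hu =>
    hbound u (by rwa [uIoc_of_le hpq] at hu)
  rwa [Real.norm_eq_abs, abs_of_nonneg (sub_nonneg.mpr hpq), mul_comm, ← hsub] at this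

theorem abs_second_diff_sub_le {x dx g : ℝ → ℝ} {a h ε : ℝ} (hh : 0 ≤ h)
    (hx : ∀ p ∈ Icc (a - h) (a + h), ∀ q ∈ Icc (a - h) (a + h),
      x q - x p = ∫ s in p..q, dx s)
    (hdx : ∀ p ∈ Icc (a - h) (a + h), ∀ q ∈ Icc (a - h) (a + h),
      dx q - dx p = ∫ s in p..q, g s)
    (hdx_cont : ContinuousOn dx (Icc (a - h) (a + h)))
    (hg_cont : ContinuousOn g (Icc (a - h) (a + h)))
    (hmod : ∀ u ∈ Icc (a - h) (a + h), |g u - g a| ≤ ε) :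
    |x (a + h) - 2 * x a + x (a - h) - h ^ 2 * g a| ≤ h ^ 2 * ε := by
  set I := Icc (a - h) (a + h)
  have mem : ∀ {u}, a - h ≤ u → u ≤ a + h → u ∈ I := fun h₁ h₂ => ⟨h₁, h₂⟩
  have ha : a ∈ I := mem (by linarith) (by linarith)
  have hpos : a + h ∈ I := mem (by linarith) le_rfl
  have hneg : a - h ∈ I := mem le_rfl (by linarith)
  have hshift : IntervalIntegrable (fun s => dx (s - h)) volume a (a + h) := by
    refine (hdx_cont.comp (continuous_sub_right h).continuousOn fun s hs => ?_).intervalIntegrable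
    rw [uIcc_of_le (by linarith)] at hs
    exact mem (by linarith [hs.1]) (by linarith [hs.2])
  have hsecond : x (a + h) - 2 * x a + x (a - h) = ∫ s in a..a + h, (dx s - dx (s - h)) := by
    have hback : x a - x (a - h) = ∫ s in a..a + h, dx (s - h) := by
      rw [hx _ hneg _ ha, intervalIntegral.integral_comp_sub_right, add_sub_cancel_right]
    rw [intervalIntegral.integral_sub ((hdx_cont.mono (uIcc_subset_Icc ha hpos)).intervalIntegrable)
      hshift, ← hback, ← hx _ ha _ hpos]
    ring
  have hinner : ∀ s ∈ Ioc a (a + h), |dx s - dx (s - h) - h * g a| ≤ h * ε := by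
    intro s hs
    have hs' : s ∈ I := mem (by linarith [hs.1]) hs.2
    have hsh : s - h ∈ I := mem (by linarith [hs.1]) (by linarith [hs.2])
    have := abs_intervalIntegral_sub_mul_le (c := g a) (sub_le_self s hh)
      (hg_cont.mono (uIcc_subset_Icc hsh hs')).intervalIntegrable fun u hu =>
        hmod u (mem (by linarith [hu.1, hs.1]) (by linarith [hu.2, hs.2]))
    rwa [sub_sub_cancel, ← hdx _ hsh _ hs'] at this
  have := abs_intervalIntegral_sub_mul_le (le_add_of_nonneg_right hh)
    ((hdx_cont.mono (uIcc_subset_Icc ha hpos)).intervalIntegrable.sub hshift) hinner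
  rw [add_sub_cancel_left, ← hsecond] at this
  rwa [sq, mul_assoc, mul_assoc]

theorem exists_abs_sq_mul_second_diff_sub_le {x dx g : ℝ → ℝ}
    (hx : ∀ t ∈ Icc (0 : ℝ) 1, x t = x 0 + ∫ s in 0..t, dx s)
    (hdx : ∀ t ∈ Icc (0 : ℝ) 1, dx t = dx 0 + ∫ s in 0..t, g s)
    (hg : ContinuousOn g (Icc 0 1)) {ε : ℝ} (hε : 0 < ε) :
    ∃ N₀ : ℕ, ∀ N ≥ N₀, ∀ j, j + 2 ≤ N →
      |(N : ℝ) ^ 2 * (x ((j + 2 : ℕ) / N) - 2 * x ((j + 1 : ℕ) / N) + x (j / N))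
        - g ((j + 1 : ℕ) / N)| ≤ ε := by
  have hgint : IntervalIntegrable g volume 0 1 := hg.intervalIntegrable_of_Icc zero_le_one
  have hdx_cont := continuousOn_of_eq_primitive hdx hgint
  have hdxint : IntervalIntegrable dx volume 0 1 := hdx_cont.intervalIntegrable_of_Icc zero_le_one
  obtain ⟨δ, hδ, hgδ⟩ := Metric.uniformContinuousOn_iff_le.mp
    (isCompact_Icc.uniformContinuousOn_of_continuous hg) ε hε
  obtain ⟨N₀, hN₀⟩ := exists_nat_gt (1 / δ)
  refine ⟨N₀, fun N hN j hj => ?_⟩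
  have hNpos : (0 : ℝ) < N := Nat.cast_pos.mpr (by omega)
  set a : ℝ := (j + 1 : ℕ) / N
  set h : ℝ := 1 / N
  have hh0 : 0 ≤ h := by positivity
  have hhδ : h ≤ δ := by
    rw [div_le_iff₀ hNpos]
    have : (N₀ : ℝ) ≤ N := by exact_mod_cast hN
    rw [div_lt_iff₀ hδ] at hN₀
    nlinarith
  have hplus : ((j + 2 : ℕ) : ℝ) / N = a + h := by simp only [a, h]; push_cast; ring
  have hminus : (j : ℝ) / N = a - h := by simp only [a, h]; push_cast; ring
  have hI : Icc (a - h) (a + h) ⊆ Icc 0 1 := by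
    rw [← hplus, ← hminus]
    exact Icc_subset_Icc (by positivity) (by rw [div_le_one hNpos]; exact_mod_cast hj)
  have htrunc := abs_second_diff_sub_le (x := x) (a := a) (ε := ε) hh0
    (fun p hp q hq => sub_eq_integral_of_eq_primitive hx hdxint (hI hp) (hI hq))
    (fun p hp q hq => sub_eq_integral_of_eq_primitive hdx hgint (hI hp) (hI hq))
    (hdx_cont.mono hI) (hg.mono hI) fun u hu =>
      hgδ u (hI hu) a (hI ⟨by linarith, by linarith⟩)
        ((Real.dist_eq _ _).trans_le
          (abs_sub_le_iff.mpr ⟨by linarith [hu.2], by linarith [hu.1]⟩))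
  have hscale : (N : ℝ) ^ 2 * h ^ 2 = 1 := by simp only [h]; field_simp
  rw [hplus, hminus]
  calc |(N : ℝ) ^ 2 * (x (a + h) - 2 * x a + x (a - h)) - g a|
      = (N : ℝ) ^ 2 * |x (a + h) - 2 * x a + x (a - h) - h ^ 2 * g a| := by
        rw [← abs_of_pos (pow_pos hNpos 2), ← abs_mul, abs_of_pos (pow_pos hNpos 2)]
        congr 1
        linear_combination (g a) * hscale
    _ ≤ (N : ℝ) ^ 2 * (h ^ 2 * ε) := by gcongr
    _ = ε := by rw [← mul_assoc, hscale, one_mul]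

theorem mul_sq_sub_le_of_le_deriv {φ φ' : ℝ → ℝ} {m : ℝ}
    (hφ : ∀ z, HasDerivAt φ (φ' z) z) (hm : ∀ z, m ≤ φ' z) (y z : ℝ) :
    m * (y - z) ^ 2 ≤ (φ y - φ z) * (y - z) := by
  have hmono : Monotone fun w => φ w - m * w :=
    monotone_of_hasDerivAt_nonneg (fun w => (hφ w).sub ((hasDerivAt_id w).const_mul m))
      fun w => by simpa using hm w
  have key : 0 ≤ ((φ y - m * y) - (φ z - m * z)) * (y - z) := by
    rcases le_total y z with hyz | hyz
    · exact mul_nonneg_of_nonpos_of_nonpos (sub_nonpos.mpr (hmono hyz))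
        (sub_nonpos.mpr hyz)
    · exact mul_nonneg (sub_nonneg.mpr (hmono hyz)) (sub_nonneg.mpr hyz)
  linarith

theorem mul_abs_sub_le_of_consistent {N : ℕ} {u w : ℕ → ℝ} {F : ℕ → ℝ → ℝ} {m T : ℝ}
    (hm : -1 < m) (hm0 : m ≤ 0) (hT : 0 ≤ T) (h0 : u 0 = w 0) (hN : u N = w N)
    (hF : ∀ j, j + 2 ≤ N → ∀ y z, m * (y - z) ^ 2 ≤ (F j y - F j z) * (y - z))
    (hw : ∀ j, j + 2 ≤ N →
      (N : ℝ) ^ 2 * (w (j + 2) - 2 * w (j + 1) + w j) = F j (w (j + 1)))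
    (hu : ∀ j, j + 2 ≤ N →
      |(N : ℝ) ^ 2 * (u (j + 2) - 2 * u (j + 1) + u j) - F j (u (j + 1))| ≤ T) :
    ∀ k ≤ N, (1 + m) * |u k - w k| ≤ T := by
  refine mul_abs_le_of_le_second_diff_mul (e := fun k => u k - w k) hm hm0 hT
    (sub_eq_zero.mpr h0) (sub_eq_zero.mpr hN) fun j hj => ?_
  set r := (N : ℝ) ^ 2 * (u (j + 2) - 2 * u (j + 1) + u j) - F j (u (j + 1))
  have hsplit :
      (N : ℝ) ^ 2 * ((u (j + 2) - w (j + 2)) - 2 * (u (j + 1) - w (j + 1)) + (u j - w j))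
      = r + (F j (u (j + 1)) - F j (w (j + 1))) := by rw [← hw j hj]; ring
  have hr : -(T * |u (j + 1) - w (j + 1)|) ≤ r * (u (j + 1) - w (j + 1)) := by
    rw [neg_le, ← neg_mul]
    calc -r * (u (j + 1) - w (j + 1)) ≤ |r| * |u (j + 1) - w (j + 1)| := by
          rw [← abs_neg r, ← abs_mul]; exact le_abs_self _
      _ ≤ T * |u (j + 1) - w (j + 1)| := by gcongr; exact hu j hj
  rw [hsplit]
  nlinarith [hF j hj (u (j + 1)) (w (j + 1))]

theorem discrete_solutions_are_nonspurious_general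
    (f fx : ℝ → ℝ → ℝ) (v : ℝ → ℝ)
    (hv : ContinuousOn v (Set.Icc (0:ℝ) 1))
    (hf_cont : ContinuousOn (fun p : ℝ × ℝ => f p.1 p.2) (Set.Icc 0 1 ×ˢ Set.univ))
    (hfx_deriv : ∀ t ∈ Set.Icc (0:ℝ) 1, ∀ z : ℝ, HasDerivAt (fun w => f t w) (fx t z) z)
    (hfx_lb : ∃ m : ℝ, -1 < m ∧ ∀ t ∈ Set.Icc (0:ℝ) 1, ∀ z : ℝ, m ≤ fx t z)
    -- x⋆ solves the continuous Dirichlet problem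
    (xstar : Xfun)
    (hxstar : ∀ᵐ t ∂(volume.restrict (Set.Ioc (0:ℝ) 1)),
        xstar.ddx t = f t (xstar.x t) + v t)
    -- for each N ≥ 2, xN N ∈ 𝔼_N solves the discrete Dirichlet problem
    (xN : ℕ → ℤ → ℝ)
    (hxN : ∀ N : ℕ, 2 ≤ N →
        xN N 0 = 0 ∧ xN N (N:ℤ) = 0 ∧
        ∀ k : ℤ, 1 ≤ k → k ≤ (N:ℤ) - 1 →
          xN N (k+1) - 2 * xN N k + xN N (k-1)
            = (1/(N:ℝ)^2) * f ((k:ℝ)/(N:ℝ)) (xN N k)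
              + (1/(N:ℝ)^2) * v ((k:ℝ)/(N:ℝ))) :
    -- then max_{0 ≤ k ≤ N} |x⋆(k/N) − x_N(k)| → 0 as N → ∞
    ∀ ε > (0:ℝ), ∃ N₀ : ℕ, ∀ N : ℕ, N₀ ≤ N →
      ∀ k : ℤ, 0 ≤ k → k ≤ (N:ℤ) →
        |xstar.x ((k:ℝ)/(N:ℝ)) - xN N k| ≤ ε := by
  obtain ⟨m, hm, hfx_ge⟩ := hfx_lb
  have hm' : -1 < min m 0 := lt_min hm (by norm_num)
  have hg_cont : ContinuousOn (fun t => f t (xstar.x t) + v t) (Icc 0 1) :=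
    (hf_cont.comp (continuousOn_id.prodMk xstar.continuousOn_x_s18)
      fun t ht => ⟨ht, mem_univ _⟩).add hv
  intro ε hε
  have hT : 0 < (1 + min m 0) * ε := mul_pos (by linarith) hε
  obtain ⟨N₀, hN₀⟩ := exists_abs_sq_mul_second_diff_sub_le xstar.x_rep
    (xstar.dx_eq_add_integral_of_ae_eq hxstar) hg_cont hT
  refine ⟨max 2 N₀, fun N hN k hk0 hkN => ?_⟩
  obtain ⟨hx0, hxN', hdisc⟩ := hxN N (le_of_max_le_left hN)
  have hNpos : (0 : ℝ) < N := Nat.cast_pos.mpr (by omega)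
  have hgrid : ∀ j, j + 2 ≤ N → ((j + 1 : ℕ) : ℝ) / N ∈ Icc 0 1 := fun j hj =>
    ⟨by positivity, (div_le_one hNpos).mpr (by exact_mod_cast (by omega : j + 1 ≤ N))⟩
  have hmono : ∀ j, j + 2 ≤ N → ∀ y z,
      min m 0 * (y - z) ^ 2 ≤ (f ((j + 1 : ℕ) / N) y - f ((j + 1 : ℕ) / N) z) * (y - z) :=
    fun j hj => mul_sq_sub_le_of_le_deriv (hfx_deriv _ (hgrid j hj))
      fun z => (min_le_left m 0).trans (hfx_ge _ (hgrid j hj) z)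
  have hscheme : ∀ j, j + 2 ≤ N →
      (N : ℝ) ^ 2 * (xN N (j + 2 : ℕ) - 2 * xN N (j + 1 : ℕ) + xN N j)
        = f ((j + 1 : ℕ) / N) (xN N (j + 1 : ℕ)) + v ((j + 1 : ℕ) / N) := fun j hj => by
    have h := hdisc (j + 1 : ℕ) (by omega) (by omega)
    rw [show ((j + 1 : ℕ) : ℤ) + 1 = (j + 2 : ℕ) by push_cast; ring,
      show ((j + 1 : ℕ) : ℤ) - 1 = j by push_cast; ring, Int.cast_natCast] at h
    rw [h]
    field_simp
  lift k to ℕ using hk0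
  have := mul_abs_sub_le_of_consistent
    (u := fun k : ℕ => xstar.x (k / N)) (w := fun k : ℕ => xN N k)
    (F := fun j z => f ((j + 1 : ℕ) / N) z + v ((j + 1 : ℕ) / N)) hm' (min_le_right m 0) hT.le
    (by simp [xstar.bc0, hx0]) (by simp [div_self hNpos.ne', xstar.bc1, hxN'])
    (fun j hj y z => by simpa using hmono j hj y z) hscheme
    (hN₀ N (le_of_max_le_right hN)) k (by exact_mod_cast hkN)
  simp only [Int.cast_natCast]
  exact le_of_mul_le_mul_left this (by linarith)

/-- **Non-spurious solutions.**
Let `v : [0,1] → ℝ` be continuous and let `f` satisfy C(c), D(f) (`0 < A < 1`, `0 < B`,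
`|f(t,x)| ≤ A|x| + B`) and D(f_x) (`inf f_x > −1`).  Let `x⋆ ∈ 𝕏 = H²(0,1) ∩ H¹₀(0,1)`
be the solution of the continuous problem `ẍ = f(t,x) + v`, `x(0) = x(1) = 0`, and for
every `N ≥ 2` let `xN N` be the solution of the discrete problem
`Δ²x(k−1) = (1/N²) f(k/N, x(k)) + (1/N²) v(k/N)`, `x(0) = x(N) = 0`.  Then
`max_{0 ≤ k ≤ N} |x⋆(k/N) − x_N(k)| → 0` as `N → ∞`. -/
theorem discrete_solutions_are_nonspurious
    (f fx : ℝ → ℝ → ℝ) (v : ℝ → ℝ)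
    (hv : ContinuousOn v (Set.Icc (0:ℝ) 1))
    (hf_cont : ContinuousOn (fun p : ℝ × ℝ => f p.1 p.2) (Set.Icc 0 1 ×ˢ Set.univ))
    (hfx_deriv : ∀ t ∈ Set.Icc (0:ℝ) 1, ∀ z : ℝ, HasDerivAt (fun w => f t w) (fx t z) z)
    (hfx_cont : ContinuousOn (fun p : ℝ × ℝ => fx p.1 p.2) (Set.Icc 0 1 ×ˢ Set.univ))
    (A B : ℝ) (hA : 0 < A) (hB : 0 < B) (hAlt : A < 1)
    (hgrowth : ∀ t ∈ Set.Icc (0:ℝ) 1, ∀ z : ℝ, |f t z| ≤ A * |z| + B)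
    (hfx_lb : ∃ m : ℝ, -1 < m ∧ ∀ t ∈ Set.Icc (0:ℝ) 1, ∀ z : ℝ, m ≤ fx t z)
    -- x⋆ solves the continuous Dirichlet problem
    (xstar : Xfun)
    (hxstar : ∀ᵐ t ∂(volume.restrict (Set.Ioc (0:ℝ) 1)),
        xstar.ddx t = f t (xstar.x t) + v t)
    -- for each N ≥ 2, xN N ∈ 𝔼_N solves the discrete Dirichlet problem
    (xN : ℕ → ℤ → ℝ)
    (hxN : ∀ N : ℕ, 2 ≤ N →
        xN N 0 = 0 ∧ xN N (N:ℤ) = 0 ∧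
        ∀ k : ℤ, 1 ≤ k → k ≤ (N:ℤ) - 1 →
          xN N (k+1) - 2 * xN N k + xN N (k-1)
            = (1/(N:ℝ)^2) * f ((k:ℝ)/(N:ℝ)) (xN N k)
              + (1/(N:ℝ)^2) * v ((k:ℝ)/(N:ℝ))) :
    -- then max_{0 ≤ k ≤ N} |x⋆(k/N) − x_N(k)| → 0 as N → ∞
    ∀ ε > (0:ℝ), ∃ N₀ : ℕ, ∀ N : ℕ, N₀ ≤ N →
      ∀ k : ℤ, 0 ≤ k → k ≤ (N:ℤ) →
        |xstar.x ((k:ℝ)/(N:ℝ)) - xN N k| ≤ ε :=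
  discrete_solutions_are_nonspurious_general f fx v hv hf_cont hfx_deriv hfx_lb xstar hxstar xN hxN
end
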